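/- arXiv:1309.2740 — 12 statements merged into one kernel-verified Lean document; each statement's English description precedes it below -/
import Mathlib

section
/- Let N ≥ 1 and let Ω ⊆ ℝ^N be a nonempty open set. Let f : Ω → ℝ^N, η : Ω → ℝ and u : Ω → ℝ be differentiable. Define ζ(W) := η(W)·u(W), the entropy variables φ(W) := Dη(W) (the Fréchet derivative, a linear form on ℝ^N), the dual entropy η*(W) := φ(W)(W) − η(W), and the thermodynamic flux g(W) := f(W) − u(W)·W. Then for every W ∈ Ω, the entropy compatibility identity Dζ(W) = Dη(W) ∘ Df(W) (an equality of linear forms on ℝ^N) holds if and only if φ(W) ∘ Dg(W) + η*(W) · Du(W) = 0 (as linear forms on ℝ^N). -/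
/-- Proposition 1 (compatibility relation): the entropy compatibility identity
`Dζ = Dη ∘ Df` holds at `W ∈ Ω` iff `φ ∘ Dg + η* · Du = 0` at `W`. -/
theorem statement_0 (N : ℕ) (hN : 1 ≤ N)
    (Ω : Set (Fin N → ℝ)) (hΩne : Ω.Nonempty) (hΩ : IsOpen Ω)
    (f : (Fin N → ℝ) → (Fin N → ℝ)) (η u : (Fin N → ℝ) → ℝ)
    (hf : ∀ W ∈ Ω, DifferentiableAt ℝ f W)
    (hη : ∀ W ∈ Ω, DifferentiableAt ℝ η W)
    (hu : ∀ W ∈ Ω, DifferentiableAt ℝ u W)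
    (ζ : (Fin N → ℝ) → ℝ) (hζ : ζ = fun W => η W * u W)
    (φ : (Fin N → ℝ) → ((Fin N → ℝ) →L[ℝ] ℝ)) (hφ : φ = fun W => fderiv ℝ η W)
    (ηs : (Fin N → ℝ) → ℝ) (hηs : ηs = fun W => φ W W - η W)
    (g : (Fin N → ℝ) → (Fin N → ℝ)) (hg : g = fun W => f W - u W • W) :
    ∀ W ∈ Ω,
      (fderiv ℝ ζ W = (fderiv ℝ η W).comp (fderiv ℝ f W) ↔
        (φ W).comp (fderiv ℝ g W) + ηs W • fderiv ℝ u W = 0) := by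
  intro W hW
  subst hζ hφ hηs hg
  have hfW := hf W hW
  have hηW := hη W hW
  have huW := hu W hW
  have hζ' : fderiv ℝ (fun W => η W * u W) W
      = η W • fderiv ℝ u W + u W • fderiv ℝ η W := fderiv_mul hηW huW
  have hid : DifferentiableAt ℝ (fun W : Fin N → ℝ => W) W := differentiableAt_fun_id
  have hsm : DifferentiableAt ℝ (fun W : Fin N → ℝ => u W • W) W := huW.smul hid
  have hsm' : fderiv ℝ (fun W : Fin N → ℝ => u W • W) W
      = u W • ContinuousLinearMap.id ℝ (Fin N → ℝ)
        + (fderiv ℝ u W).smulRight W := by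
    rw [fderiv_fun_smul huW hid, fderiv_id']
  have hg' : fderiv ℝ (fun W => f W - u W • W) W
      = fderiv ℝ f W - (u W • ContinuousLinearMap.id ℝ (Fin N → ℝ)
        + (fderiv ℝ u W).smulRight W) := by
    rw [fderiv_fun_sub hfW hsm, hsm']
  have key : (fderiv ℝ η W).comp (fderiv ℝ (fun W => f W - u W • W) W)
      + (fderiv ℝ η W W - η W) • fderiv ℝ u W
      = (fderiv ℝ η W).comp (fderiv ℝ f W) - fderiv ℝ (fun W => η W * u W) W := by
    rw [hg', hζ']
    ext x
    simp [ContinuousLinearMap.comp_apply, ContinuousLinearMap.sub_apply,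
      ContinuousLinearMap.add_apply, ContinuousLinearMap.smul_apply,
      ContinuousLinearMap.smulRight_apply, map_sub, map_add, map_smul,
      smul_eq_mul]
    ring
  rw [key, sub_eq_zero, eq_comm]
end

section
/- Let N ≥ 1. Let G : ℝ → M₂(ℝ), θ ↦ G_θ = [[α_θ, δ_θ], [β_θ, γ_θ]], be a map such that every G_θ is invertible and G_{θ+θ'} = G_θ · G_{θ'} for all θ, θ' ∈ ℝ. Let Y : ℝ → GL(ℝ^N) be a family of invertible linear maps, let Ω ⊆ ℝ^N be a nonempty open set, let f : Ω → ℝ^N, and let T : ℝ × Ω → Ω be a family of transformations satisfying T_{θ+θ'} = T_{θ'} ∘ T_θ and, for all θ ∈ ℝ and W ∈ Ω: T_θ(W) = γ_θ · Y_θ(W) + β_θ · Y_θ(f(W)) and f(T_θ(W)) = δ_θ · Y_θ(W) + α_θ · Y_θ(f(W)). Then Y_{θ+θ'} = Y_θ ∘ Y_{θ'} for all θ, θ' ∈ ℝ; that is, Y is a linear representation of the additive group ℝ. -/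
/-- Proposition 2 (linear representation): if the covariance relations hold for all θ,
then θ ↦ Y_θ is a linear representation of the additive group ℝ. -/
theorem statement_1 (N : ℕ) (hN : 1 ≤ N)
    (G : ℝ → Matrix (Fin 2) (Fin 2) ℝ)
    (hGinv : ∀ θ, IsUnit (G θ))
    (hGgrp : ∀ θ θ', G (θ + θ') = G θ * G θ')
    (Y : ℝ → ((Fin N → ℝ) ≃ₗ[ℝ] (Fin N → ℝ)))
    (Ω : Set (Fin N → ℝ)) (hΩne : Ω.Nonempty) (hΩ : IsOpen Ω)
    (f : (Fin N → ℝ) → (Fin N → ℝ))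
    (T : ℝ → (Fin N → ℝ) → (Fin N → ℝ))
    (hTmem : ∀ θ : ℝ, ∀ W ∈ Ω, T θ W ∈ Ω)
    (hTgrp : ∀ θ θ' : ℝ, ∀ W ∈ Ω, T (θ + θ') W = T θ' (T θ W))
    -- T_θ(W) = γ_θ • Y_θ(W) + β_θ • Y_θ(f(W)),  with G_θ = [[α, δ], [β, γ]]
    (hT1 : ∀ θ : ℝ, ∀ W ∈ Ω, T θ W = G θ 1 1 • Y θ W + G θ 1 0 • Y θ (f W))
    -- f(T_θ(W)) = δ_θ • Y_θ(W) + α_θ • Y_θ(f(W))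
    (hT2 : ∀ θ : ℝ, ∀ W ∈ Ω, f (T θ W) = G θ 0 1 • Y θ W + G θ 0 0 • Y θ (f W)) :
    ∀ θ θ' : ℝ, ∀ v : Fin N → ℝ, Y (θ + θ') v = Y θ (Y θ' v) := by
  intro θ θ'
  -- Step 1: the identity holds for all W ∈ Ω.
  have key : ∀ W ∈ Ω, Y (θ + θ') W = Y θ (Y θ' W) := by
    intro W hW
    have hW' : T θ' W ∈ Ω := hTmem θ' W hW
    have hg : T (θ + θ') W = T θ (T θ' W) := by
      rw [add_comm]; exact hTgrp θ' θ W hW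
    have hYT : Y θ (T θ' W)
        = G θ' 1 1 • Y θ (Y θ' W) + G θ' 1 0 • Y θ (Y θ' (f W)) := by
      rw [hT1 θ' W hW, map_add, map_smul, map_smul]
    have hYfT : Y θ (f (T θ' W))
        = G θ' 0 1 • Y θ (Y θ' W) + G θ' 0 0 • Y θ (Y θ' (f W)) := by
      rw [hT2 θ' W hW, map_add, map_smul, map_smul]
    have E2 : G (θ + θ') 1 1 • Y (θ + θ') W + G (θ + θ') 1 0 • Y (θ + θ') (f W)
        = G θ 1 1 • (G θ' 1 1 • Y θ (Y θ' W) + G θ' 1 0 • Y θ (Y θ' (f W)))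
          + G θ 1 0 • (G θ' 0 1 • Y θ (Y θ' W) + G θ' 0 0 • Y θ (Y θ' (f W))) := by
      rw [← hT1 (θ + θ') W hW, hg, hT1 θ (T θ' W) hW', hYT, hYfT]
    have E1 : G (θ + θ') 0 1 • Y (θ + θ') W + G (θ + θ') 0 0 • Y (θ + θ') (f W)
        = G θ 0 1 • (G θ' 1 1 • Y θ (Y θ' W) + G θ' 1 0 • Y θ (Y θ' (f W)))
          + G θ 0 0 • (G θ' 0 1 • Y θ (Y θ' W) + G θ' 0 0 • Y θ (Y θ' (f W))) := by
      rw [← hT2 (θ + θ') W hW, hg, hT2 θ (T θ' W) hW', hYT, hYfT]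
    have hmul : G (θ + θ') = G θ * G θ' := hGgrp θ θ'
    have hdet : Matrix.det (G (θ + θ')) ≠ 0 :=
      ((Matrix.isUnit_iff_isUnit_det _).mp (hGinv (θ + θ'))).ne_zero
    have hdet2 : G (θ + θ') 0 0 * G (θ + θ') 1 1 - G (θ + θ') 0 1 * G (θ + θ') 1 0 ≠ 0 := by
      rwa [Matrix.det_fin_two] at hdet
    have m00 : G (θ + θ') 0 0 = G θ 0 0 * G θ' 0 0 + G θ 0 1 * G θ' 1 0 := by
      rw [hmul, Matrix.mul_apply, Fin.sum_univ_two]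
    have m01 : G (θ + θ') 0 1 = G θ 0 0 * G θ' 0 1 + G θ 0 1 * G θ' 1 1 := by
      rw [hmul, Matrix.mul_apply, Fin.sum_univ_two]
    have m10 : G (θ + θ') 1 0 = G θ 1 0 * G θ' 0 0 + G θ 1 1 * G θ' 1 0 := by
      rw [hmul, Matrix.mul_apply, Fin.sum_univ_two]
    have m11 : G (θ + θ') 1 1 = G θ 1 0 * G θ' 0 1 + G θ 1 1 * G θ' 1 1 := by
      rw [hmul, Matrix.mul_apply, Fin.sum_univ_two]
    funext i
    have e2i := congrFun E2 i
    have e1i := congrFun E1 i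
    simp only [Pi.add_apply, Pi.smul_apply, smul_eq_mul] at e2i e1i
    have E2' : G (θ + θ') 1 1 * Y (θ + θ') W i + G (θ + θ') 1 0 * Y (θ + θ') (f W) i
        = G (θ + θ') 1 1 * Y θ (Y θ' W) i + G (θ + θ') 1 0 * Y θ (Y θ' (f W)) i := by
      linear_combination e2i - Y θ (Y θ' W) i * m11 - Y θ (Y θ' (f W)) i * m10
    have E1' : G (θ + θ') 0 1 * Y (θ + θ') W i + G (θ + θ') 0 0 * Y (θ + θ') (f W) i
        = G (θ + θ') 0 1 * Y θ (Y θ' W) i + G (θ + θ') 0 0 * Y θ (Y θ' (f W)) i := by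
      linear_combination e1i - Y θ (Y θ' W) i * m01 - Y θ (Y θ' (f W)) i * m00
    have hz : (G (θ + θ') 0 0 * G (θ + θ') 1 1 - G (θ + θ') 0 1 * G (θ + θ') 1 0)
        * (Y (θ + θ') W i - Y θ (Y θ' W) i) = 0 := by
      linear_combination G (θ + θ') 0 0 * E2' - G (θ + θ') 1 0 * E1'
    have := (mul_eq_zero.mp hz).resolve_left hdet2
    linarith
  -- Step 2: extend from the open set Ω to all of ℝ^N by linearity.
  obtain ⟨W₀, hW₀⟩ := hΩne
  obtain ⟨ε, hε, hball⟩ := Metric.isOpen_iff.mp hΩ W₀ hW₀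
  intro v
  set t : ℝ := ε / (2 * (‖v‖ + 1)) with ht
  have hvpos : (0:ℝ) < ‖v‖ + 1 := by positivity
  have htpos : 0 < t := by positivity
  have hmem : W₀ + t • v ∈ Ω := by
    apply hball
    have : dist (W₀ + t • v) W₀ = t * ‖v‖ := by
      rw [dist_eq_norm]
      simp [norm_smul, abs_of_pos htpos]
    rw [Metric.mem_ball, this]
    have h1 : t * ‖v‖ < t * (‖v‖ + 1) := by nlinarith
    have h2 : t * (‖v‖ + 1) = ε / 2 := by
      field_simp [ht]
      rw [ht]
      field_simp
    calc t * ‖v‖ < t * (‖v‖ + 1) := h1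
      _ = ε / 2 := h2
      _ < ε := by linarith
  have k1 := key W₀ hW₀
  have k2 := key (W₀ + t • v) hmem
  rw [map_add, map_smul, map_add, map_smul, map_add, map_smul, k1] at k2
  have : t • (Y (θ + θ') v) = t • (Y θ (Y θ' v)) := by
    have := add_left_cancel k2
    simpa using this
  exact smul_right_injective (Fin N → ℝ) (ne_of_gt htpos) this
end

section
/- Let N ≥ 1, Ω ⊆ ℝ^N open, and let f : Ω → ℝ^N, η : Ω → ℝ, u : Ω → ℝ be differentiable such that ζ := η·u satisfies Dζ(W) = Dη(W)∘Df(W) for all W ∈ Ω; set φ(W) := Dη(W), η*(W) := φ(W)(W) − η(W), g(W) := f(W) − u(W)·W. Let G : ℝ → M₂(ℝ), θ ↦ G_θ = [[α_θ, δ_θ],[β_θ, γ_θ]], be differentiable with G_{θ+θ'} = G_θ G_{θ'}, G₀ = I, and set G₀' := (d/dθ)G_θ|_{θ=0}. Let Y : ℝ → L(ℝ^N) be differentiable with Y_{θ+θ'} = Y_θ∘Y_{θ'}, Y₀ = id, and set Y₀' := (d/dθ)Y_θ|_{θ=0}. Let I ⊆ ℝ be an open interval and let θ : I → ℝ, W₀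 : I → ℝ^N, g₀ : I → ℝ^N, σ : I → ℝ and W : I → Ω be differentiable and satisfy, for all t ∈ I: W(t) = γ_{θ(t)} Y_{θ(t)}(W₀(t)) + β_{θ(t)} Y_{θ(t)}(g₀(t)); f(W(t)) = δ_{θ(t)} Y_{θ(t)}(W₀(t)) + α_{θ(t)} Y_{θ(t)}(g₀(t)); η(W(t)) = γ_{θ(t)} σ(t); and η(W(t))·u(W(t)) = δ_{θ(t)} σ(t). Then for every t ∈ I, writing φ := φ(W(t)), u := u(W(t)), η* := η*(W(t)), g := g(W(t)), F := f(W(t)), the following vector identity holds in ℝ²: θ'(t) · G₀' · (u·η* + φ(g), η*)ᵀ + θ'(t) · (φ(Y₀'(F)), φ(Y₀'(W(t))))ᵀ + G_{θ(t)} · (φ(Y_{θ(t)}(g₀'(t))), φ(Y_{θ(t)}(W₀'(t))) − σ'(t))ᵀ = 0. -/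
/-- Proposition 6 (differential relations for the entropy variables). -/
theorem statement_4 (N : ℕ) (hN : 1 ≤ N)
    (Ω : Set (Fin N → ℝ)) (hΩ : IsOpen Ω)
    (f : (Fin N → ℝ) → (Fin N → ℝ)) (η u : (Fin N → ℝ) → ℝ)
    (hf : ∀ W ∈ Ω, DifferentiableAt ℝ f W)
    (hη : ∀ W ∈ Ω, DifferentiableAt ℝ η W)
    (hu : ∀ W ∈ Ω, DifferentiableAt ℝ u W)
    (hcompat : ∀ W ∈ Ω,
      fderiv ℝ (fun V => η V * u V) W = (fderiv ℝ η W).comp (fderiv ℝ f W))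
    (α β γ δ : ℝ → ℝ)
    (hα : Differentiable ℝ α) (hβ : Differentiable ℝ β)
    (hγ : Differentiable ℝ γ) (hδ : Differentiable ℝ δ)
    (G : ℝ → Matrix (Fin 2) (Fin 2) ℝ)
    (hG : G = fun θ => !![α θ, δ θ; β θ, γ θ])
    (hGgrp : ∀ θ θ', G (θ + θ') = G θ * G θ') (hG0 : G 0 = 1)
    (G0' : Matrix (Fin 2) (Fin 2) ℝ)
    (hG0' : G0' = !![deriv α 0, deriv δ 0; deriv β 0, deriv γ 0])
    (Y : ℝ → ((Fin N → ℝ) →L[ℝ] (Fin N → ℝ)))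
    (hYdiff : Differentiable ℝ Y)
    (hYgrp : ∀ θ θ', Y (θ + θ') = (Y θ).comp (Y θ'))
    (hY0 : Y 0 = ContinuousLinearMap.id ℝ (Fin N → ℝ))
    (Y0' : (Fin N → ℝ) →L[ℝ] (Fin N → ℝ)) (hY0' : Y0' = deriv Y 0)
    (I : Set ℝ) (hI : ∃ x y : ℝ, I = Set.Ioo x y)
    (θ : ℝ → ℝ) (W₀ g₀ : ℝ → (Fin N → ℝ)) (σ : ℝ → ℝ) (W : ℝ → (Fin N → ℝ))
    (hθd : ∀ t ∈ I, DifferentiableAt ℝ θ t)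
    (hW₀d : ∀ t ∈ I, DifferentiableAt ℝ W₀ t)
    (hg₀d : ∀ t ∈ I, DifferentiableAt ℝ g₀ t)
    (hσd : ∀ t ∈ I, DifferentiableAt ℝ σ t)
    (hWd : ∀ t ∈ I, DifferentiableAt ℝ W t)
    (hWmem : ∀ t ∈ I, W t ∈ Ω)
    (hWrel : ∀ t ∈ I, W t = γ (θ t) • Y (θ t) (W₀ t) + β (θ t) • Y (θ t) (g₀ t))
    (hfrel : ∀ t ∈ I, f (W t) = δ (θ t) • Y (θ t) (W₀ t) + α (θ t) • Y (θ t) (g₀ t))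
    (hηrel : ∀ t ∈ I, η (W t) = γ (θ t) * σ t)
    (hηurel : ∀ t ∈ I, η (W t) * u (W t) = δ (θ t) * σ t) :
    ∀ t ∈ I,
      deriv θ t •
          G0'.mulVec
            ![u (W t) * ((fderiv ℝ η (W t)) (W t) - η (W t))
                + fderiv ℝ η (W t) (f (W t) - u (W t) • W t),
              (fderiv ℝ η (W t)) (W t) - η (W t)]
        + deriv θ t •
            ![fderiv ℝ η (W t) (Y0' (f (W t))),
              fderiv ℝ η (W t) (Y0' (W t))]
        + (G (θ t)).mulVec
            ![fderiv ℝ η (W t) (Y (θ t) (deriv g₀ t)),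
              fderiv ℝ η (W t) (Y (θ t) (deriv W₀ t)) - deriv σ t]
      = 0 := by
  obtain ⟨x0, y0, hIxy⟩ := hI
  have hIopen : IsOpen I := hIxy ▸ isOpen_Ioo
  -- entry-wise group relations
  have hent : ∀ s r : ℝ,
      α (s + r) = α s * α r + δ s * β r ∧
      δ (s + r) = α s * δ r + δ s * γ r ∧
      β (s + r) = β s * α r + γ s * β r ∧
      γ (s + r) = β s * δ r + γ s * γ r := by
    intro s r
    have h := hGgrp s r
    rw [hG] at h
    refine ⟨?_, ?_, ?_, ?_⟩
    · have := congrFun (congrFun h 0) 0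
      simpa [Matrix.mul_apply, Fin.sum_univ_two] using this
    · have := congrFun (congrFun h 0) 1
      simpa [Matrix.mul_apply, Fin.sum_univ_two] using this
    · have := congrFun (congrFun h 1) 0
      simpa [Matrix.mul_apply, Fin.sum_univ_two] using this
    · have := congrFun (congrFun h 1) 1
      simpa [Matrix.mul_apply, Fin.sum_univ_two] using this
  -- derivative of translated scalar entries
  have key : ∀ (p p1 p2 : ℝ → ℝ), Differentiable ℝ p1 → Differentiable ℝ p2 →
      ∀ (A B r : ℝ), (∀ s, p (s + r) = p1 s * A + p2 s * B) →
      deriv p r = deriv p1 0 * A + deriv p2 0 * B := by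
    intro p p1 p2 hp1 hp2 A B r hrel
    have h1 : deriv (fun s => p (s + r)) 0 = deriv p r := by
      rw [deriv_comp_add_const]; norm_num
    have h2 : HasDerivAt (fun s => p1 s * A + p2 s * B)
        (deriv p1 0 * A + deriv p2 0 * B) 0 :=
      ((hp1 0).hasDerivAt.mul_const A).add ((hp2 0).hasDerivAt.mul_const B)
    rw [← h1, funext hrel, h2.deriv]
  -- derivative of Y
  have hdY : ∀ r, deriv Y r = Y0'.comp (Y r) := by
    intro r
    have h1 : deriv (fun s => Y (s + r)) 0 = deriv Y r := by
      rw [deriv_comp_add_const]; norm_num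
    have h2 : HasDerivAt (fun s => (Y s).comp (Y r)) ((deriv Y 0).comp (Y r)) 0 := by
      have := (hYdiff 0).hasDerivAt.clm_comp (hasDerivAt_const (0:ℝ) (Y r))
      simpa using this
    have h3 : (fun s => Y (s + r)) = fun s => (Y s).comp (Y r) :=
      funext fun s => hYgrp s r
    rw [hY0', ← h1, h3, h2.deriv]
  intro t₀ ht
  have hmemΩ := hWmem t₀ ht
  have hnhds : I ∈ nhds t₀ := hIopen.mem_nhds ht
  have hdα : deriv α (θ t₀) = deriv α 0 * α (θ t₀) + deriv δ 0 * β (θ t₀) :=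
    key α α δ hα hδ _ _ _ (fun s => (hent s (θ t₀)).1)
  have hdδ : deriv δ (θ t₀) = deriv α 0 * δ (θ t₀) + deriv δ 0 * γ (θ t₀) :=
    key δ α δ hα hδ _ _ _ (fun s => (hent s (θ t₀)).2.1)
  have hdβ : deriv β (θ t₀) = deriv β 0 * α (θ t₀) + deriv γ 0 * β (θ t₀) :=
    key β β γ hβ hγ _ _ _ (fun s => (hent s (θ t₀)).2.2.1)
  have hdγ : deriv γ (θ t₀) = deriv β 0 * δ (θ t₀) + deriv γ 0 * γ (θ t₀) :=
    key γ β γ hβ hγ _ _ _ (fun s => (hent s (θ t₀)).2.2.2)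
  have hθ' : HasDerivAt θ (deriv θ t₀) t₀ := (hθd t₀ ht).hasDerivAt
  have hσ' : HasDerivAt σ (deriv σ t₀) t₀ := (hσd t₀ ht).hasDerivAt
  have hYθ : HasDerivAt (fun t => Y (θ t)) (deriv θ t₀ • Y0'.comp (Y (θ t₀))) t₀ := by
    have := ((hYdiff (θ t₀)).hasDerivAt).scomp t₀ hθ'
    rw [hdY (θ t₀)] at this
    simpa [Function.comp_def] using this
  have hA : HasDerivAt (fun t => Y (θ t) (W₀ t))
      (deriv θ t₀ • Y0' (Y (θ t₀) (W₀ t₀)) + Y (θ t₀) (deriv W₀ t₀)) t₀ := by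
    have := hYθ.clm_apply (hW₀d t₀ ht).hasDerivAt
    simpa using this
  have hB : HasDerivAt (fun t => Y (θ t) (g₀ t))
      (deriv θ t₀ • Y0' (Y (θ t₀) (g₀ t₀)) + Y (θ t₀) (deriv g₀ t₀)) t₀ := by
    have := hYθ.clm_apply (hg₀d t₀ ht).hasDerivAt
    simpa using this
  have hαθ : HasDerivAt (fun t => α (θ t)) (deriv α (θ t₀) * deriv θ t₀) t₀ := by
    simpa [Function.comp_def] using (hα (θ t₀)).hasDerivAt.comp t₀ hθ'
  have hβθ : HasDerivAt (fun t => β (θ t)) (deriv β (θ t₀) * deriv θ t₀) t₀ := by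
    simpa [Function.comp_def] using (hβ (θ t₀)).hasDerivAt.comp t₀ hθ'
  have hγθ : HasDerivAt (fun t => γ (θ t)) (deriv γ (θ t₀) * deriv θ t₀) t₀ := by
    simpa [Function.comp_def] using (hγ (θ t₀)).hasDerivAt.comp t₀ hθ'
  have hδθ : HasDerivAt (fun t => δ (θ t)) (deriv δ (θ t₀) * deriv θ t₀) t₀ := by
    simpa [Function.comp_def] using (hδ (θ t₀)).hasDerivAt.comp t₀ hθ'
  -- the derivative of W at t₀
  have hWd' : HasDerivAt W
      (γ (θ t₀) • (deriv θ t₀ • Y0' (Y (θ t₀) (W₀ t₀)) + Y (θ t₀) (deriv W₀ t₀))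
        + (deriv γ (θ t₀) * deriv θ t₀) • Y (θ t₀) (W₀ t₀)
        + (β (θ t₀) • (deriv θ t₀ • Y0' (Y (θ t₀) (g₀ t₀)) + Y (θ t₀) (deriv g₀ t₀))
          + (deriv β (θ t₀) * deriv θ t₀) • Y (θ t₀) (g₀ t₀))) t₀ := by
    have hrhs := (hγθ.smul hA).add (hβθ.smul hB)
    have hev : W =ᶠ[nhds t₀]
        (fun t => γ (θ t) • Y (θ t) (W₀ t) + β (θ t) • Y (θ t) (g₀ t)) :=
      Filter.eventuallyEq_of_mem hnhds hWrel
    exact hrhs.congr_of_eventuallyEq hev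
  -- E1 : differentiate η ∘ W
  have hE1 : fderiv ℝ η (W t₀)
        (γ (θ t₀) • (deriv θ t₀ • Y0' (Y (θ t₀) (W₀ t₀)) + Y (θ t₀) (deriv W₀ t₀))
        + (deriv γ (θ t₀) * deriv θ t₀) • Y (θ t₀) (W₀ t₀)
        + (β (θ t₀) • (deriv θ t₀ • Y0' (Y (θ t₀) (g₀ t₀)) + Y (θ t₀) (deriv g₀ t₀))
          + (deriv β (θ t₀) * deriv θ t₀) • Y (θ t₀) (g₀ t₀)))
      = deriv γ (θ t₀) * deriv θ t₀ * σ t₀ + γ (θ t₀) * deriv σ t₀ := by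
    have h1 : HasDerivAt (fun t => η (W t)) (fderiv ℝ η (W t₀)
        (γ (θ t₀) • (deriv θ t₀ • Y0' (Y (θ t₀) (W₀ t₀)) + Y (θ t₀) (deriv W₀ t₀))
        + (deriv γ (θ t₀) * deriv θ t₀) • Y (θ t₀) (W₀ t₀)
        + (β (θ t₀) • (deriv θ t₀ • Y0' (Y (θ t₀) (g₀ t₀)) + Y (θ t₀) (deriv g₀ t₀))
          + (deriv β (θ t₀) * deriv θ t₀) • Y (θ t₀) (g₀ t₀)))) t₀ := by
      simpa [Function.comp_def] using
        (hη _ hmemΩ).hasFDerivAt.comp_hasDerivAt t₀ hWd'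
    have hev : (fun t => η (W t)) =ᶠ[nhds t₀] (fun t => γ (θ t) * σ t) :=
      Filter.eventuallyEq_of_mem hnhds hηrel
    exact h1.unique ((hγθ.mul hσ').congr_of_eventuallyEq hev)
  -- E2 : differentiate f ∘ W
  have hE2 : fderiv ℝ f (W t₀)
        (γ (θ t₀) • (deriv θ t₀ • Y0' (Y (θ t₀) (W₀ t₀)) + Y (θ t₀) (deriv W₀ t₀))
        + (deriv γ (θ t₀) * deriv θ t₀) • Y (θ t₀) (W₀ t₀)
        + (β (θ t₀) • (deriv θ t₀ • Y0' (Y (θ t₀) (g₀ t₀)) + Y (θ t₀) (deriv g₀ t₀))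
          + (deriv β (θ t₀) * deriv θ t₀) • Y (θ t₀) (g₀ t₀)))
      = δ (θ t₀) • (deriv θ t₀ • Y0' (Y (θ t₀) (W₀ t₀)) + Y (θ t₀) (deriv W₀ t₀))
        + (deriv δ (θ t₀) * deriv θ t₀) • Y (θ t₀) (W₀ t₀)
        + (α (θ t₀) • (deriv θ t₀ • Y0' (Y (θ t₀) (g₀ t₀)) + Y (θ t₀) (deriv g₀ t₀))
          + (deriv α (θ t₀) * deriv θ t₀) • Y (θ t₀) (g₀ t₀)) := by
    have h1 : HasDerivAt (fun t => f (W t)) (fderiv ℝ f (W t₀)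
        (γ (θ t₀) • (deriv θ t₀ • Y0' (Y (θ t₀) (W₀ t₀)) + Y (θ t₀) (deriv W₀ t₀))
        + (deriv γ (θ t₀) * deriv θ t₀) • Y (θ t₀) (W₀ t₀)
        + (β (θ t₀) • (deriv θ t₀ • Y0' (Y (θ t₀) (g₀ t₀)) + Y (θ t₀) (deriv g₀ t₀))
          + (deriv β (θ t₀) * deriv θ t₀) • Y (θ t₀) (g₀ t₀)))) t₀ := by
      simpa [Function.comp_def] using
        (hf _ hmemΩ).hasFDerivAt.comp_hasDerivAt t₀ hWd'
    have hrhs := (hδθ.smul hA).add (hαθ.smul hB)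
    have hev : (fun t => f (W t)) =ᶠ[nhds t₀]
        (fun t => δ (θ t) • Y (θ t) (W₀ t) + α (θ t) • Y (θ t) (g₀ t)) :=
      Filter.eventuallyEq_of_mem hnhds hfrel
    exact h1.unique (hrhs.congr_of_eventuallyEq hev)
  -- E3 : differentiate (η·u) ∘ W
  have hE3 : fderiv ℝ η (W t₀) (fderiv ℝ f (W t₀)
        (γ (θ t₀) • (deriv θ t₀ • Y0' (Y (θ t₀) (W₀ t₀)) + Y (θ t₀) (deriv W₀ t₀))
        + (deriv γ (θ t₀) * deriv θ t₀) • Y (θ t₀) (W₀ t₀)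
        + (β (θ t₀) • (deriv θ t₀ • Y0' (Y (θ t₀) (g₀ t₀)) + Y (θ t₀) (deriv g₀ t₀))
          + (deriv β (θ t₀) * deriv θ t₀) • Y (θ t₀) (g₀ t₀))))
      = deriv δ (θ t₀) * deriv θ t₀ * σ t₀ + δ (θ t₀) * deriv σ t₀ := by
    have hd : DifferentiableAt ℝ (fun V => η V * u V) (W t₀) :=
      (hη _ hmemΩ).mul (hu _ hmemΩ)
    have h1 : HasDerivAt (fun t => η (W t) * u (W t))
        ((fderiv ℝ (fun V => η V * u V) (W t₀))
        (γ (θ t₀) • (deriv θ t₀ • Y0' (Y (θ t₀) (W₀ t₀)) + Y (θ t₀) (deriv W₀ t₀))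
        + (deriv γ (θ t₀) * deriv θ t₀) • Y (θ t₀) (W₀ t₀)
        + (β (θ t₀) • (deriv θ t₀ • Y0' (Y (θ t₀) (g₀ t₀)) + Y (θ t₀) (deriv g₀ t₀))
          + (deriv β (θ t₀) * deriv θ t₀) • Y (θ t₀) (g₀ t₀)))) t₀ := by
      simpa [Function.comp_def] using hd.hasFDerivAt.comp_hasDerivAt t₀ hWd'
    have hev : (fun t => η (W t) * u (W t)) =ᶠ[nhds t₀] (fun t => δ (θ t) * σ t) :=
      Filter.eventuallyEq_of_mem hnhds hηurel
    have h2 := h1.unique ((hδθ.mul hσ').congr_of_eventuallyEq hev)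
    rw [hcompat _ hmemΩ] at h2
    simpa using h2
  rw [hE2] at hE3
  -- scalar expansions
  simp only [map_add, map_smul, smul_eq_mul] at hE1 hE3
  have hYF : fderiv ℝ η (W t₀) (Y0' (f (W t₀)))
      = δ (θ t₀) * fderiv ℝ η (W t₀) (Y0' (Y (θ t₀) (W₀ t₀)))
        + α (θ t₀) * fderiv ℝ η (W t₀) (Y0' (Y (θ t₀) (g₀ t₀))) := by
    have := congrArg (fun v => fderiv ℝ η (W t₀) (Y0' v)) (hfrel t₀ ht)
    simpa [map_add, map_smul, smul_eq_mul] using this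
  have hYW : fderiv ℝ η (W t₀) (Y0' (W t₀))
      = γ (θ t₀) * fderiv ℝ η (W t₀) (Y0' (Y (θ t₀) (W₀ t₀)))
        + β (θ t₀) * fderiv ℝ η (W t₀) (Y0' (Y (θ t₀) (g₀ t₀))) := by
    have := congrArg (fun v => fderiv ℝ η (W t₀) (Y0' v)) (hWrel t₀ ht)
    simpa [map_add, map_smul, smul_eq_mul] using this
  have hφF : fderiv ℝ η (W t₀) (f (W t₀))
      = δ (θ t₀) * fderiv ℝ η (W t₀) (Y (θ t₀) (W₀ t₀))
        + α (θ t₀) * fderiv ℝ η (W t₀) (Y (θ t₀) (g₀ t₀)) := by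
    have := congrArg (fun v => fderiv ℝ η (W t₀) v) (hfrel t₀ ht)
    simpa [map_add, map_smul, smul_eq_mul] using this
  have hφW : fderiv ℝ η (W t₀) (W t₀)
      = γ (θ t₀) * fderiv ℝ η (W t₀) (Y (θ t₀) (W₀ t₀))
        + β (θ t₀) * fderiv ℝ η (W t₀) (Y (θ t₀) (g₀ t₀)) := by
    have := congrArg (fun v => fderiv ℝ η (W t₀) v) (hWrel t₀ ht)
    simpa [map_add, map_smul, smul_eq_mul] using this
  have hsub : fderiv ℝ η (W t₀) (f (W t₀) - u (W t₀) • W t₀)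
      = fderiv ℝ η (W t₀) (f (W t₀)) - u (W t₀) * fderiv ℝ η (W t₀) (W t₀) := by
    simp [map_sub, map_smul, smul_eq_mul]
  have hη0 : η (W t₀) = γ (θ t₀) * σ t₀ := hηrel t₀ ht
  have hηu0 : η (W t₀) * u (W t₀) = δ (θ t₀) * σ t₀ := hηurel t₀ ht
  funext i
  fin_cases i
  · simp only [hG, hG0', Pi.add_apply, Pi.smul_apply, Pi.zero_apply, smul_eq_mul,
      Matrix.mulVec, dotProduct, Fin.sum_univ_two, Matrix.of_apply,
      Matrix.cons_val', Matrix.cons_val_zero, Matrix.cons_val_one, Matrix.head_cons,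
      Matrix.empty_val', Matrix.cons_val_fin_one, Matrix.head_fin_const,
      Fin.mk_zero, Fin.mk_one, Fin.isValue]
    linear_combination hE3 + deriv θ t₀ * hYF + deriv θ t₀ * deriv α 0 * hsub
      + deriv θ t₀ * deriv α 0 * hφF + deriv θ t₀ * deriv δ 0 * hφW
      + (- deriv θ t₀ * fderiv ℝ η (W t₀) (Y (θ t₀) (W₀ t₀)) + deriv θ t₀ * σ t₀) * hdδ
      + (- deriv θ t₀ * fderiv ℝ η (W t₀) (Y (θ t₀) (g₀ t₀))) * hdα
      + (- deriv θ t₀ * deriv α 0) * hηu0 + (- deriv θ t₀ * deriv δ 0) * hη0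
  · simp only [hG, hG0', Pi.add_apply, Pi.smul_apply, Pi.zero_apply, smul_eq_mul,
      Matrix.mulVec, dotProduct, Fin.sum_univ_two, Matrix.of_apply,
      Matrix.cons_val', Matrix.cons_val_zero, Matrix.cons_val_one, Matrix.head_cons,
      Matrix.empty_val', Matrix.cons_val_fin_one, Matrix.head_fin_const,
      Fin.mk_zero, Fin.mk_one, Fin.isValue]
    linear_combination hE1 + deriv θ t₀ * hYW + deriv θ t₀ * deriv β 0 * hsub
      + deriv θ t₀ * deriv β 0 * hφF + deriv θ t₀ * deriv γ 0 * hφW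
      + (- deriv θ t₀ * fderiv ℝ η (W t₀) (Y (θ t₀) (W₀ t₀)) + deriv θ t₀ * σ t₀) * hdγ
      + (- deriv θ t₀ * fderiv ℝ η (W t₀) (Y (θ t₀) (g₀ t₀))) * hdβ
      + (- deriv θ t₀ * deriv β 0) * hηu0 + (- deriv θ t₀ * deriv γ 0) * hη0
end

section
/- Let N ≥ 1, Ω ⊆ ℝ^N open, and let f : Ω → ℝ^N, η : Ω → ℝ, u : Ω → ℝ be differentiable such that ζ := η·u satisfies Dζ(W) = Dη(W)∘Df(W) for all W ∈ Ω; set φ(W) := Dη(W), η*(W) := φ(W)(W) − η(W), g(W) := f(W) − u(W)·W. Let c ≠ 0 and ε ∈ ℝ, and let S, C : ℝ → ℝ be differentiable with S(0) = 0, C(0) = 1, S' = C and C' = ε·S. Let Y : ℝ → GL(ℝ^N) be differentiable with Y_{θ+θ'} = Y_θ∘Y_{θ'}, Y₀ = id, and Y₀' := (d/dθ)Y_θ|_{θ=0}. Let H ⊂ ℝ^N be a linear hyperplane, let Ω₀ be a nonempty relatively open subset of an affine hyperplane with direction H, and let σ : Ω₀ → ℝ and g₀ : Ω₀ → ℝ^N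 be differentiable. Assume that for every θ ∈ ℝ and W₀ ∈ Ω₀, the state W(θ,W₀) := C_θ Y_θ(W₀) + (ε/c) S_θ Y_θ(g₀(W₀)) lies in Ω and satisfies f(W(θ,W₀)) = c S_θ Y_θ(W₀) + C_θ Y_θ(g₀(W₀)), η(W(θ,W₀)) = C_θ σ(W₀), and η(W(θ,W₀))·u(W(θ,W₀)) = c S_θ σ(W₀). Then for all θ ∈ ℝ, W₀ ∈ Ω₀ and h ∈ H, writing W := W(θ,W₀) and φ := Dη(W): (i) c·η*(W) + φ(Y₀'(f(W))) = 0; (ii) (ε/c)·(u(W)·η*(W) + φ(g(W))) + φ(Y₀'(W)) = 0; (iii) φ(Y_θ(Dg₀(W₀)(h))) = 0; (iv) φ(Y_θ(h)) = Dσ(W₀)(h). -/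
set_option maxHeartbeats 1000000 in

/-- Proposition 7 (constraints for the entropy variables). -/
theorem statement_5 (N : ℕ) (hN : 1 ≤ N)
    (Ω : Set (Fin N → ℝ)) (hΩ : IsOpen Ω)
    (f : (Fin N → ℝ) → (Fin N → ℝ)) (η u : (Fin N → ℝ) → ℝ)
    (hf : ∀ W ∈ Ω, DifferentiableAt ℝ f W)
    (hη : ∀ W ∈ Ω, DifferentiableAt ℝ η W)
    (hu : ∀ W ∈ Ω, DifferentiableAt ℝ u W)
    (hcompat : ∀ W ∈ Ω,
      fderiv ℝ (fun V => η V * u V) W = (fderiv ℝ η W).comp (fderiv ℝ f W))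
    (c ε : ℝ) (hc : c ≠ 0)
    (S C : ℝ → ℝ) (hSd : Differentiable ℝ S) (hCd : Differentiable ℝ C)
    (hS0 : S 0 = 0) (hC0 : C 0 = 1)
    (hS' : ∀ θ, deriv S θ = C θ) (hC' : ∀ θ, deriv C θ = ε * S θ)
    (Y : ℝ → ((Fin N → ℝ) →L[ℝ] (Fin N → ℝ)))
    (hYdiff : Differentiable ℝ Y)
    (hYbij : ∀ θ, Function.Bijective (Y θ))
    (hYgrp : ∀ θ θ', Y (θ + θ') = (Y θ).comp (Y θ'))
    (hY0 : Y 0 = ContinuousLinearMap.id ℝ (Fin N → ℝ))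
    (Y0' : (Fin N → ℝ) →L[ℝ] (Fin N → ℝ)) (hY0' : Y0' = deriv Y 0)
    -- H is a linear hyperplane, kernel of a nonzero continuous linear form r₀
    (r₀ : (Fin N → ℝ) →L[ℝ] ℝ) (hr₀ : r₀ ≠ 0)
    (H : Set (Fin N → ℝ)) (hH : H = {x | r₀ x = 0})
    -- Ω₀ is a nonempty relatively open subset of an affine hyperplane directed by H
    (Ω₀ : Set (Fin N → ℝ)) (hΩ₀ne : Ω₀.Nonempty) (b : Fin N → ℝ)
    (hΩ₀rel : ∃ U : Set (Fin N → ℝ), IsOpen U ∧ Ω₀ = U ∩ {x | x - b ∈ H})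
    (σ : (Fin N → ℝ) → ℝ) (g₀ : (Fin N → ℝ) → (Fin N → ℝ))
    (hσd : ∀ W₀ ∈ Ω₀, DifferentiableWithinAt ℝ σ Ω₀ W₀)
    (hg₀d : ∀ W₀ ∈ Ω₀, DifferentiableWithinAt ℝ g₀ Ω₀ W₀)
    (W : ℝ → (Fin N → ℝ) → (Fin N → ℝ))
    (hWdef : ∀ θ : ℝ, ∀ W₀ ∈ Ω₀,
      W θ W₀ = C θ • Y θ W₀ + ((ε / c) * S θ) • Y θ (g₀ W₀))
    (hWmem : ∀ θ : ℝ, ∀ W₀ ∈ Ω₀, W θ W₀ ∈ Ω)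
    (hfrel : ∀ θ : ℝ, ∀ W₀ ∈ Ω₀,
      f (W θ W₀) = (c * S θ) • Y θ W₀ + C θ • Y θ (g₀ W₀))
    (hηrel : ∀ θ : ℝ, ∀ W₀ ∈ Ω₀, η (W θ W₀) = C θ * σ W₀)
    (hηurel : ∀ θ : ℝ, ∀ W₀ ∈ Ω₀,
      η (W θ W₀) * u (W θ W₀) = c * S θ * σ W₀) :
    ∀ θ : ℝ, ∀ W₀ ∈ Ω₀, ∀ v ∈ H,
      (c * ((fderiv ℝ η (W θ W₀)) (W θ W₀) - η (W θ W₀))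
          + fderiv ℝ η (W θ W₀) (Y0' (f (W θ W₀))) = 0)
      ∧ ((ε / c) * (u (W θ W₀) * ((fderiv ℝ η (W θ W₀)) (W θ W₀) - η (W θ W₀))
            + fderiv ℝ η (W θ W₀) (f (W θ W₀) - u (W θ W₀) • W θ W₀))
          + fderiv ℝ η (W θ W₀) (Y0' (W θ W₀)) = 0)
      ∧ (fderiv ℝ η (W θ W₀) (Y θ (fderivWithin ℝ g₀ Ω₀ W₀ v)) = 0)
      ∧ (fderiv ℝ η (W θ W₀) (Y θ v) = fderivWithin ℝ σ Ω₀ W₀ v) := by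
  -- basic derivative facts for C and S
  have hCt : ∀ t, HasDerivAt C (ε * S t) t := fun t => (hC' t) ▸ (hCd t).hasDerivAt
  have hSt : ∀ t, HasDerivAt S (C t) t := fun t => (hS' t) ▸ (hSd t).hasDerivAt
  -- the invariant C² - ε S² = 1
  have key : ∀ t : ℝ, C t ^ 2 - ε * S t ^ 2 = 1 := by
    have h0 : ∀ t : ℝ, HasDerivAt (fun s => C s ^ 2 - ε * S s ^ 2) 0 t := by
      intro t
      have := ((hCt t).pow 2).sub (((hSt t).pow 2).const_mul ε)
      refine this.congr_deriv ?_
      simp; ring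
    intro t
    have hconst := is_const_of_deriv_eq_zero (f := fun s => C s ^ 2 - ε * S s ^ 2)
      (fun s => (h0 s).differentiableAt) (fun s => (h0 s).deriv) t 0
    simpa [hS0, hC0] using hconst
  have hinv : c * c⁻¹ = 1 := mul_inv_cancel₀ hc
  -- derivative of Y
  have hY0d : HasDerivAt Y Y0' 0 := by rw [hY0']; exact (hYdiff 0).hasDerivAt
  have hYder : ∀ t : ℝ, HasDerivAt Y (Y0'.comp (Y t)) t := by
    intro t
    have h2 : HasDerivAt (fun s : ℝ => s + t) 1 0 := (hasDerivAt_id 0).add_const t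
    have h3 : HasDerivAt Y (deriv Y t) ((fun s : ℝ => s + t) 0) := by
      simpa using (hYdiff t).hasDerivAt
    have h1 : HasDerivAt (fun s : ℝ => Y (s + t)) (deriv Y t) 0 := by
      simpa [Function.comp_def] using h3.scomp 0 h2
    have h4 : HasDerivAt (fun s : ℝ => (Y s).comp (Y t)) (Y0'.comp (Y t) + (Y 0).comp 0) 0 :=
      hY0d.clm_comp (hasDerivAt_const 0 (Y t))
    have h5 : (fun s : ℝ => Y (s + t)) = fun s : ℝ => (Y s).comp (Y t) := by
      funext s; rw [hYgrp]
    rw [h5] at h1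
    have h6 : deriv Y t = Y0'.comp (Y t) := by simpa using h1.unique h4
    exact h6 ▸ (hYdiff t).hasDerivAt
  have hYx : ∀ (t : ℝ) (x : Fin N → ℝ), HasDerivAt (fun s => Y s x) (Y0' (Y t x)) t := by
    intro t x
    have := (hYder t).clm_apply (hasDerivAt_const t x)
    simpa using this
  intro θ W₀ hW₀ v hv
  subst hH
  obtain ⟨U, hUopen, hU₀⟩ := hΩ₀rel
  have hW₀U : W₀ ∈ U := by rw [hU₀] at hW₀; exact hW₀.1
  have hW₀H : r₀ (W₀ - b) = 0 := by rw [hU₀] at hW₀; exact hW₀.2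
  have hvH : r₀ v = 0 := hv
  -- the curve θ ↦ W θ W₀ and its derivative
  have hWcder : ∀ t : ℝ,
      HasDerivAt (fun s => C s • Y s W₀ + ((ε / c) * S s) • Y s (g₀ W₀))
        ((ε / c) • f (W t W₀) + Y0' (W t W₀)) t := by
    intro t
    have h1 := (hCt t).smul (hYx t W₀)
    have h2 := ((hSt t).const_mul (ε / c)).smul (hYx t (g₀ W₀))
    have h3 := h1.add h2
    refine h3.congr_deriv ?_
    rw [hfrel t W₀ hW₀, hWdef t W₀ hW₀]
    simp only [smul_add, map_add, map_smul, smul_smul]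
    match_scalars <;> (field_simp; try ring)
  have hfcder : ∀ t : ℝ,
      HasDerivAt (fun s => (c * S s) • Y s W₀ + C s • Y s (g₀ W₀))
        (c • W t W₀ + Y0' (f (W t W₀))) t := by
    intro t
    have h1 := ((hSt t).const_mul c).smul (hYx t W₀)
    have h2 := (hCt t).smul (hYx t (g₀ W₀))
    have h3 := h1.add h2
    refine h3.congr_deriv ?_
    rw [hfrel t W₀ hW₀, hWdef t W₀ hW₀]
    simp only [smul_add, map_add, map_smul, smul_smul]
    match_scalars <;> (field_simp; try ring)
  have hWmemθ := hWmem θ W₀ hW₀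
  have hηW := hη _ hWmemθ
  have huW := hu _ hWmemθ
  have hfW := hf _ hWmemθ
  set φ := fderiv ℝ η (W θ W₀) with hφdef
  set Df := fderiv ℝ f (W θ W₀) with hDfdef
  have hWpt : W θ W₀ = C θ • Y θ W₀ + ((ε / c) * S θ) • Y θ (g₀ W₀) := hWdef θ W₀ hW₀
  have hφat : HasFDerivAt η φ (C θ • Y θ W₀ + ((ε / c) * S θ) • Y θ (g₀ W₀)) := by
    rw [← hWpt]; exact hηW.hasFDerivAt
  have hDfat : HasFDerivAt f Df (C θ • Y θ W₀ + ((ε / c) * S θ) • Y θ (g₀ W₀)) := by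
    rw [← hWpt]; exact hfW.hasFDerivAt
  have hζat : HasFDerivAt (fun V => η V * u V) (φ.comp Df)
      (C θ • Y θ W₀ + ((ε / c) * S θ) • Y θ (g₀ W₀)) := by
    rw [← hWpt, hφdef, hDfdef, ← hcompat _ hWmemθ]
    exact (hηW.mul huW).hasFDerivAt
  -- η along the curve
  have hfunη : (fun s => η (C s • Y s W₀ + ((ε / c) * S s) • Y s (g₀ W₀)))
      = fun s => C s * σ W₀ := by
    funext s; rw [← hWdef s W₀ hW₀, hηrel s W₀ hW₀]
  have hA : HasDerivAt (fun s => C s * σ W₀)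
      (φ ((ε / c) • f (W θ W₀) + Y0' (W θ W₀))) θ := by
    rw [← hfunη]
    exact hφat.comp_hasDerivAt θ (hWcder θ)
  have hA2 : HasDerivAt (fun s => C s * σ W₀) (ε * S θ * σ W₀) θ := by
    simpa using (hCt θ).mul_const (σ W₀)
  have eqA : (ε / c) * φ (f (W θ W₀)) + φ (Y0' (W θ W₀)) = ε * S θ * σ W₀ := by
    have := hA.unique hA2
    simpa [map_add, map_smul, smul_eq_mul] using this
  -- f along the curve
  have hfunf : (fun s => f (C s • Y s W₀ + ((ε / c) * S s) • Y s (g₀ W₀)))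
      = fun s => (c * S s) • Y s W₀ + C s • Y s (g₀ W₀) := by
    funext s; rw [← hWdef s W₀ hW₀, hfrel s W₀ hW₀]
  have hB : HasDerivAt (fun s => (c * S s) • Y s W₀ + C s • Y s (g₀ W₀))
      (Df ((ε / c) • f (W θ W₀) + Y0' (W θ W₀))) θ := by
    rw [← hfunf]
    exact hDfat.comp_hasDerivAt θ (hWcder θ)
  have eqDf : Df ((ε / c) • f (W θ W₀) + Y0' (W θ W₀))
      = c • W θ W₀ + Y0' (f (W θ W₀)) := hB.unique (hfcder θ)
  -- ζ along the curve
  have hfunζ : (fun s => η (C s • Y s W₀ + ((ε / c) * S s) • Y s (g₀ W₀))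
        * u (C s • Y s W₀ + ((ε / c) * S s) • Y s (g₀ W₀)))
      = fun s => c * S s * σ W₀ := by
    funext s; rw [← hWdef s W₀ hW₀, hηurel s W₀ hW₀]
  have hZ : HasDerivAt (fun s => c * S s * σ W₀)
      (φ (Df ((ε / c) • f (W θ W₀) + Y0' (W θ W₀)))) θ := by
    rw [← hfunζ]
    have := hζat.comp_hasDerivAt θ (hWcder θ)
    exact this
  have hZ2 : HasDerivAt (fun s => c * S s * σ W₀) (c * C θ * σ W₀) θ := by
    have := ((hSt θ).const_mul c).mul_const (σ W₀)
    simpa [mul_assoc] using this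
  have eqB : c * φ (W θ W₀) + φ (Y0' (f (W θ W₀))) = c * C θ * σ W₀ := by
    have h := hZ.unique hZ2
    rw [eqDf] at h
    simpa [map_add, map_smul, smul_eq_mul] using h
  have hηθ : η (W θ W₀) = C θ * σ W₀ := hηrel θ W₀ hW₀
  have hηuθ : η (W θ W₀) * u (W θ W₀) = c * S θ * σ W₀ := hηurel θ W₀ hW₀
  refine ⟨?_, ?_, ?_, ?_⟩
  · linear_combination eqB - c * hηθ
  · have hexp : φ (f (W θ W₀) - u (W θ W₀) • W θ W₀)
        = φ (f (W θ W₀)) - u (W θ W₀) * φ (W θ W₀) := by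
      simp [map_sub, map_smul, smul_eq_mul]
    rw [hexp]
    linear_combination eqA - (ε / c) * hηuθ - (ε * S θ * σ W₀) * hinv
  all_goals {
    -- within part
    have hvt : v ∈ tangentConeAt ℝ Ω₀ W₀ := by
      apply mem_tangentConeAt_of_pow_smul (r := (1 : ℝ) / 2) (by norm_num)
        (by rw [Real.norm_eq_abs, abs_lt]; norm_num)
      have h0 : Filter.Tendsto (fun n : ℕ => ((1 : ℝ) / 2) ^ n) Filter.atTop (nhds 0) :=
        tendsto_pow_atTop_nhds_zero_of_lt_one (by norm_num) (by norm_num)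
      have htend : Filter.Tendsto (fun n : ℕ => W₀ + ((1 : ℝ) / 2) ^ n • v)
          Filter.atTop (nhds W₀) := by
        have := Filter.Tendsto.const_add W₀ (h0.smul_const v)
        simpa using this
      have hUev : ∀ᶠ n in Filter.atTop, W₀ + ((1 : ℝ) / 2) ^ n • v ∈ U :=
        htend.eventually_mem (hUopen.mem_nhds hW₀U)
      filter_upwards [hUev] with n hn
      rw [hU₀]
      refine ⟨hn, ?_⟩
      show r₀ (W₀ + ((1 : ℝ) / 2) ^ n • v - b) = 0
      have hrw : W₀ + ((1 : ℝ) / 2) ^ n • v - b = (W₀ - b) + ((1 : ℝ) / 2) ^ n • v := by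
        abel
      rw [hrw, map_add, map_smul, hW₀H, hvH]
      simp
    have hL := (hg₀d W₀ hW₀).hasFDerivWithinAt
    have hM := (hσd W₀ hW₀).hasFDerivWithinAt
    set L := fderivWithin ℝ g₀ Ω₀ W₀ with hLdef
    set M := fderivWithin ℝ σ Ω₀ W₀ with hMdef
    have hYθL : HasFDerivWithinAt (fun x => Y θ (g₀ x)) ((Y θ).comp L) Ω₀ W₀ :=
      (Y θ).hasFDerivAt.comp_hasFDerivWithinAt W₀ hL
    set K := C θ • (Y θ) + ((ε / c) * S θ) • ((Y θ).comp L) with hKdef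
    set K2 := (c * S θ) • (Y θ) + C θ • ((Y θ).comp L) with hK2def
    have hWm : HasFDerivWithinAt (fun x => C θ • Y θ x + ((ε / c) * S θ) • Y θ (g₀ x))
        K Ω₀ W₀ :=
      (((Y θ).hasFDerivAt.hasFDerivWithinAt).const_smul (C θ)).add
        (hYθL.const_smul ((ε / c) * S θ))
    have hfm : HasFDerivWithinAt (fun x => (c * S θ) • Y θ x + C θ • Y θ (g₀ x))
        K2 Ω₀ W₀ :=
      (((Y θ).hasFDerivAt.hasFDerivWithinAt).const_smul (c * S θ)).add
        (hYθL.const_smul (C θ))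
    -- η ∘ Wm
    have hηWm : HasFDerivWithinAt
        (fun x => η (C θ • Y θ x + ((ε / c) * S θ) • Y θ (g₀ x))) (φ.comp K) Ω₀ W₀ := by
      have := hφat.comp_hasFDerivWithinAt W₀ hWm
      exact this
    have hησ : HasFDerivWithinAt (fun x => C θ * σ x) (φ.comp K) Ω₀ W₀ :=
      hηWm.congr (fun y hy => by beta_reduce; rw [← hWdef θ y hy, hηrel θ y hy])
        (by rw [← hWdef θ W₀ hW₀, hηrel θ W₀ hW₀])
    have hησ2 : HasFDerivWithinAt (fun x => C θ * σ x) (C θ • M) Ω₀ W₀ := by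
      simpa [Pi.smul_def, smul_eq_mul] using hM.const_smul (C θ)
    have eqC : φ (K v) = C θ * M v := by
      have := hησ.unique_on hησ2 hvt
      simpa [smul_eq_mul] using this
    -- f ∘ Wm
    have hfWm : HasFDerivWithinAt
        (fun x => f (C θ • Y θ x + ((ε / c) * S θ) • Y θ (g₀ x))) (Df.comp K) Ω₀ W₀ := by
      have := hDfat.comp_hasFDerivWithinAt W₀ hWm
      exact this
    have hffm : HasFDerivWithinAt (fun x => (c * S θ) • Y θ x + C θ • Y θ (g₀ x))
        (Df.comp K) Ω₀ W₀ :=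
      hfWm.congr (fun y hy => by beta_reduce; rw [← hWdef θ y hy, hfrel θ y hy])
        (by rw [← hWdef θ W₀ hW₀, hfrel θ W₀ hW₀])
    have eqFv : Df (K v) = K2 v := hffm.unique_on hfm hvt
    -- ζ ∘ Wm
    have hζWm : HasFDerivWithinAt
        (fun x => η (C θ • Y θ x + ((ε / c) * S θ) • Y θ (g₀ x))
          * u (C θ • Y θ x + ((ε / c) * S θ) • Y θ (g₀ x)))
        ((φ.comp Df).comp K) Ω₀ W₀ := by
      have := hζat.comp_hasFDerivWithinAt W₀ hWm
      exact this
    have hζσ : HasFDerivWithinAt (fun x => c * S θ * σ x) ((φ.comp Df).comp K) Ω₀ W₀ :=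
      hζWm.congr (fun y hy => by beta_reduce; rw [← hWdef θ y hy, hηurel θ y hy])
        (by rw [← hWdef θ W₀ hW₀, hηurel θ W₀ hW₀])
    have hζσ2 : HasFDerivWithinAt (fun x => c * S θ * σ x) ((c * S θ) • M) Ω₀ W₀ := by
      simpa [Pi.smul_def, smul_eq_mul, mul_assoc] using hM.const_smul (c * S θ)
    have eqD : φ (Df (K v)) = c * S θ * M v := by
      have := hζσ.unique_on hζσ2 hvt
      simpa [smul_eq_mul, mul_assoc] using this
    rw [eqFv] at eqD
    -- expand K v and K2 v
    have hKv : φ (K v) = C θ * φ (Y θ v) + ((ε / c) * S θ) * φ (Y θ (L v)) := by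
      simp [hKdef, map_add, map_smul, smul_eq_mul]
    have hK2v : φ (K2 v) = (c * S θ) * φ (Y θ v) + C θ * φ (Y θ (L v)) := by
      simp [hK2def, map_add, map_smul, smul_eq_mul]
    rw [hKv] at eqC
    rw [hK2v] at eqD
    set a := φ (Y θ v)
    set bb := φ (Y θ (L v))
    set d := M v
    have e3 := key θ
    have e1c : c * (C θ * a) + ε * (S θ * bb) = c * (C θ * d) := by
      linear_combination c * eqC - (ε * S θ * bb) * hinv
    have had : a = d := by
      have hca : c * a = c * d := by
        linear_combination (C θ) * e1c - (ε * S θ) * eqD - (c * (a - d)) * e3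
      exact mul_left_cancel₀ hc hca
    have hb0 : bb = 0 := by
      have h4 : ε * (S θ * bb) = 0 := by
        linear_combination e1c - (c * C θ) * had
      have h5 : C θ * bb = 0 := by
        linear_combination eqD - (c * S θ) * had
      linear_combination (C θ) * h5 - S θ * h4 - bb * e3
    first
      | exact hb0
      | exact had
  }
end

section
/- Let N ≥ 1, let c, ε, C, S be real numbers with c ≠ 0, C ≠ 0 and C² − ε·S² = 1, and set u := c·S/C. Let Y, Y' : ℝ^N → ℝ^N be linear maps with Y invertible and Y ∘ Y' = Y' ∘ Y. Let W₀, g₀ ∈ ℝ^N, let φ and φ₀ be linear forms on ℝ^N with φ ∘ Y = φ₀, and let η* ∈ ℝ. Define W := C·Y(W₀) + (ε/c)·S·Y(g₀), g := (1/C)·Y(g₀), and F := u·W + g. Assume: φ(g) = 0; c·η* + φ(Y'(F)) = 0; and (ε/c)·(u·η* + φ(g)) + φ(Y'(W)) = 0. Then c·η* + C·φ₀(Y'(g₀)) = 0 and φ₀(Y'(W₀)) = 0. -/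
/-- Proposition 10 (constraints for the representation Y). -/
theorem statement_8 (N : ℕ) (hN : 1 ≤ N)
    (c ε Cc S : ℝ) (hc : c ≠ 0) (hCc : Cc ≠ 0) (htrig : Cc ^ 2 - ε * S ^ 2 = 1)
    (u : ℝ) (hu : u = c * S / Cc)
    (Y Y' : (Fin N → ℝ) →ₗ[ℝ] (Fin N → ℝ))
    (hYbij : Function.Bijective Y)
    (hcomm : Y ∘ₗ Y' = Y' ∘ₗ Y)
    (W₀ g₀ : Fin N → ℝ)
    (φ φ₀ : (Fin N → ℝ) →ₗ[ℝ] ℝ)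
    (hφY : φ ∘ₗ Y = φ₀)
    (ηs : ℝ)
    (W : Fin N → ℝ) (hW : W = Cc • Y W₀ + ((ε / c) * S) • Y g₀)
    (g : Fin N → ℝ) (hg : g = Cc⁻¹ • Y g₀)
    (F : Fin N → ℝ) (hF : F = u • W + g)
    (hφg : φ g = 0)
    (h1 : c * ηs + φ (Y' F) = 0)
    (h2 : (ε / c) * (u * ηs + φ g) + φ (Y' W) = 0) :
    c * ηs + Cc * φ₀ (Y' g₀) = 0 ∧ φ₀ (Y' W₀) = 0 := by
  have key : ∀ x, φ (Y' (Y x)) = φ₀ (Y' x) := by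
    intro x
    have h := LinearMap.congr_fun hcomm x
    simp only [LinearMap.comp_apply] at h
    rw [← hφY]
    simp only [LinearMap.comp_apply]
    rw [← h]
  set a := φ₀ (Y' W₀) with ha
  set b := φ₀ (Y' g₀) with hb
  have hφW : φ (Y' W) = Cc * a + (ε / c) * S * b := by
    rw [hW]
    simp [map_add, map_smul, key, ha, hb]
  have hφgY : φ (Y' g) = Cc⁻¹ * b := by
    rw [hg]; simp [map_smul, key, hb]
  have hφF : φ (Y' F) = u * (Cc * a + (ε / c) * S * b) + Cc⁻¹ * b := by
    rw [hF]; simp [map_add, map_smul, hφW, hφgY]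
  rw [hφF] at h1
  rw [hφW, hφg] at h2
  subst hu
  field_simp at h1 h2
  have h3 : c * (c * ηs + Cc * b) = 0 := by
    linear_combination c * Cc * h1 - c * S * h2 - c ^ 2 * ηs * htrig
  have hgoal1 : c * ηs + Cc * b = 0 := (mul_eq_zero.mp h3).resolve_left hc
  refine ⟨hgoal1, ?_⟩
  have h4 : c * (Cc ^ 2 * c * a) = 0 := by
    linear_combination c * h2 - ε * S * c * hgoal1
  have h5 := (mul_eq_zero.mp h4).resolve_left hc
  exact (mul_eq_zero.mp h5).resolve_left (by positivity)
end

section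
/- Let N ≥ 1 and let ε, c, C, S be real numbers with c ≠ 0. Let Y : ℝ^N → ℝ^N be a linear map, W₀, g₀ ∈ ℝ^N, let φ and φ₀ be linear forms on ℝ^N with φ ∘ Y = φ₀ and φ₀(g₀) = 0, and let σ ∈ ℝ. Define W := C·Y(W₀) + (ε/c)·S·Y(g₀), η := C·σ, η* := φ(W) − η, and σ* := φ₀(W₀) − σ. Then η* = C·σ*. Consequently, if moreover C ≠ 0 and Y' : ℝ^N → ℝ^N is a linear map with c·η* + C·φ₀(Y'(g₀)) = 0, then c·σ* + φ₀(Y'(g₀)) = 0. -/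
/-- Proposition 11 (dual entropy): η* = C·σ*, and the constraint of Proposition 10
rewrites as c·σ* + φ₀(Y'(g₀)) = 0. -/
theorem statement_9 (N : ℕ) (hN : 1 ≤ N)
    (ε c Cc S : ℝ) (hc : c ≠ 0)
    (Y : (Fin N → ℝ) →ₗ[ℝ] (Fin N → ℝ))
    (W₀ g₀ : Fin N → ℝ)
    (φ φ₀ : (Fin N → ℝ) →ₗ[ℝ] ℝ)
    (hφY : φ ∘ₗ Y = φ₀) (hφ₀g₀ : φ₀ g₀ = 0)
    (σ : ℝ)
    (W : Fin N → ℝ) (hW : W = Cc • Y W₀ + ((ε / c) * S) • Y g₀)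
    (η : ℝ) (hη : η = Cc * σ)
    (ηs : ℝ) (hηs : ηs = φ W - η)
    (σs : ℝ) (hσs : σs = φ₀ W₀ - σ) :
    ηs = Cc * σs ∧
      (∀ Y' : (Fin N → ℝ) →ₗ[ℝ] (Fin N → ℝ), Cc ≠ 0 →
        c * ηs + Cc * φ₀ (Y' g₀) = 0 → c * σs + φ₀ (Y' g₀) = 0) := by
  have hYW₀ : φ (Y W₀) = φ₀ W₀ := by rw [← hφY]; rfl
  have hYg₀ : φ (Y g₀) = 0 := by rw [← hφY] at hφ₀g₀; exact hφ₀g₀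
  have key : ηs = Cc * σs := by
    subst hηs hW hη hσs
    rw [map_add, LinearMap.map_smul, LinearMap.map_smul, hYW₀, hYg₀, smul_eq_mul, smul_eq_mul]
    ring
  refine ⟨key, fun Y' hCc h => ?_⟩
  rw [key] at h
  have h2 : Cc * (c * σs + φ₀ (Y' g₀)) = 0 := by linarith
  rcases mul_eq_zero.mp h2 with h3 | h3
  · exact absurd h3 hCc
  · exact h3
end

section
/- Let a > 0 and let ε, ε̃ ∈ {−1, 1}. Let S, C : ℝ → ℝ be differentiable with S(0) = 0, C(0) = 1, S' = C, C' = ε·S, and let S̃, C̃ : ℝ → ℝ be differentiable with S̃(0) = 0, C̃(0) = 1, S̃' = C̃, C̃' = ε̃·S̃ (hence C² − εS² ≡ 1 and C̃² − ε̃S̃² ≡ 1). Let U ⊆ ℝ be open and let σ : U → ℝ be twice differentiable with σ(ρ₀) ≠ 0 and σ'(ρ₀) ≠ 0 for all ρ₀ ∈ U; set h := σ/σ', ζ₀ := h' and σ*(ρ₀) := ρ₀·σ'(ρ₀) − σ(ρ₀). Define ρ, J : ℝ × U → ℝ by ρ(θ, ρ₀) := (C_θC̃_θ − εS_θS̃_θ)·ρ₀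 + ε·S_θS̃_θ·h(ρ₀) and J(θ, ρ₀) := a·[(C_θS̃_θ − εε̃·S_θC̃_θ)·ρ₀ + εε̃·S_θC̃_θ·h(ρ₀)]. Then for every (θ, ρ₀) ∈ ℝ × U, the Jacobian determinant Δ := (∂ρ/∂θ)(∂J/∂ρ₀) − (∂ρ/∂ρ₀)(∂J/∂θ) satisfies Δ = a·h(ρ₀)·[(εε̃ − 1)·C_θ²·σ*(ρ₀)/σ(ρ₀) + ε̃·S_θ²·ζ₀(ρ₀) − (C_θ² + ε̃·S_θ²)]. -/
/-- Proposition 13 (Jacobian). -/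
theorem statement_11 (a ε εt : ℝ) (ha : 0 < a)
    (hε : ε = -1 ∨ ε = 1) (hεt : εt = -1 ∨ εt = 1)
    (S C St Ct : ℝ → ℝ)
    (hSd : Differentiable ℝ S) (hCd : Differentiable ℝ C)
    (hStd : Differentiable ℝ St) (hCtd : Differentiable ℝ Ct)
    (hS0 : S 0 = 0) (hC0 : C 0 = 1) (hSt0 : St 0 = 0) (hCt0 : Ct 0 = 1)
    (hS' : ∀ θ, deriv S θ = C θ) (hC' : ∀ θ, deriv C θ = ε * S θ)
    (hSt' : ∀ θ, deriv St θ = Ct θ) (hCt' : ∀ θ, deriv Ct θ = εt * St θ)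
    (U : Set ℝ) (hU : IsOpen U)
    (σ : ℝ → ℝ)
    (hσd : ∀ x ∈ U, DifferentiableAt ℝ σ x)
    (hσd2 : ∀ x ∈ U, DifferentiableAt ℝ (deriv σ) x)
    (hσ0 : ∀ x ∈ U, σ x ≠ 0) (hσ'0 : ∀ x ∈ U, deriv σ x ≠ 0)
    (h ζ₀ σs : ℝ → ℝ)
    (hh : h = fun x => σ x / deriv σ x)
    (hζ₀ : ζ₀ = deriv h)
    (hσs : σs = fun x => x * deriv σ x - σ x)
    (ρ J : ℝ → ℝ → ℝ)
    (hρ : ρ = fun θ ρ₀ =>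
      (C θ * Ct θ - ε * S θ * St θ) * ρ₀ + ε * S θ * St θ * h ρ₀)
    (hJ : J = fun θ ρ₀ =>
      a * ((C θ * St θ - ε * εt * S θ * Ct θ) * ρ₀ + ε * εt * S θ * Ct θ * h ρ₀)) :
    ∀ θ : ℝ, ∀ ρ₀ ∈ U,
      deriv (fun t => ρ t ρ₀) θ * deriv (fun x => J θ x) ρ₀
          - deriv (fun x => ρ θ x) ρ₀ * deriv (fun t => J t ρ₀) θ
        = a * h ρ₀ *
            ((ε * εt - 1) * C θ ^ 2 * (σs ρ₀ / σ ρ₀)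
              + εt * S θ ^ 2 * ζ₀ ρ₀ - (C θ ^ 2 + εt * S θ ^ 2)) := by
  intro θ ρ₀ hρ₀
  -- Pythagorean identities
  have hc : C θ ^ 2 - ε * S θ ^ 2 = 1 := by
    have hd : Differentiable ℝ (fun t => C t ^ 2 - ε * S t ^ 2) := by fun_prop
    have hd0 : ∀ t, deriv (fun t => C t ^ 2 - ε * S t ^ 2) t = 0 := by
      intro t
      have h1 : HasDerivAt C (ε * S t) t := by simpa [hC'] using (hCd t).hasDerivAt
      have h2 : HasDerivAt S (C t) t := by simpa [hS'] using (hSd t).hasDerivAt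
      have hder : HasDerivAt (fun t => C t ^ 2 - ε * S t ^ 2)
          (2 * C t ^ 1 * (ε * S t) - ε * (2 * S t ^ 1 * C t)) t := by
        have := ((h1.pow 2).sub ((h2.pow 2).const_mul ε))
        convert this using 1
        any_goals rfl
        all_goals norm_num
      rw [hder.deriv]; ring
    have := is_const_of_deriv_eq_zero hd hd0 θ 0
    simp only [hS0, hC0] at this
    simpa using this
  have hct : Ct θ ^ 2 - εt * St θ ^ 2 = 1 := by
    have hd : Differentiable ℝ (fun t => Ct t ^ 2 - εt * St t ^ 2) := by fun_prop
    have hd0 : ∀ t, deriv (fun t => Ct t ^ 2 - εt * St t ^ 2) t = 0 := by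
      intro t
      have h1 : HasDerivAt Ct (εt * St t) t := by simpa [hCt'] using (hCtd t).hasDerivAt
      have h2 : HasDerivAt St (Ct t) t := by simpa [hSt'] using (hStd t).hasDerivAt
      have hder : HasDerivAt (fun t => Ct t ^ 2 - εt * St t ^ 2)
          (2 * Ct t ^ 1 * (εt * St t) - εt * (2 * St t ^ 1 * Ct t)) t := by
        have := ((h1.pow 2).sub ((h2.pow 2).const_mul εt))
        convert this using 1
        any_goals rfl
        all_goals norm_num
      rw [hder.deriv]; ring
    have := is_const_of_deriv_eq_zero hd hd0 θ 0
    simp only [hSt0, hCt0] at this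
    simpa using this
  have he2 : ε ^ 2 = 1 := by rcases hε with h' | h' <;> rw [h'] <;> norm_num
  have hf2 : εt ^ 2 = 1 := by rcases hεt with h' | h' <;> rw [h'] <;> norm_num
  -- derivatives of the group functions at θ
  have hCθ : HasDerivAt C (ε * S θ) θ := by simpa [hC'] using (hCd θ).hasDerivAt
  have hSθ : HasDerivAt S (C θ) θ := by simpa [hS'] using (hSd θ).hasDerivAt
  have hCtθ : HasDerivAt Ct (εt * St θ) θ := by simpa [hCt'] using (hCtd θ).hasDerivAt
  have hStθ : HasDerivAt St (Ct θ) θ := by simpa [hSt'] using (hStd θ).hasDerivAt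
  -- h at ρ₀
  have hhd : DifferentiableAt ℝ h ρ₀ := by
    rw [hh]; exact (hσd ρ₀ hρ₀).div (hσd2 ρ₀ hρ₀) (hσ'0 ρ₀ hρ₀)
  have hH : HasDerivAt h (ζ₀ ρ₀) ρ₀ := by rw [hζ₀]; exact hhd.hasDerivAt
  have hh0 : h ρ₀ ≠ 0 := by
    rw [hh]; exact div_ne_zero (hσ0 ρ₀ hρ₀) (hσ'0 ρ₀ hρ₀)
  have hk : σs ρ₀ / σ ρ₀ * h ρ₀ = ρ₀ - h ρ₀ := by
    rw [hσs, hh]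
    field_simp [hσ0 ρ₀ hρ₀, hσ'0 ρ₀ hρ₀]
  -- the four partial derivatives
  have Hρθ : HasDerivAt (fun t => (C t * Ct t - ε * S t * St t) * ρ₀ + ε * S t * St t * h ρ₀)
      ((εt - ε) * C θ * St θ * ρ₀ + ε * (C θ * St θ + S θ * Ct θ) * h ρ₀) θ := by
    have := (((hCθ.mul hCtθ).sub ((hSθ.const_mul ε).mul hStθ)).mul_const ρ₀).add
      (((hSθ.const_mul ε).mul hStθ).mul_const (h ρ₀))
    convert this using 1
    any_goals rfl
    all_goals ring
  have dρθ : deriv (fun t => ρ t ρ₀) θ =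
      (εt - ε) * C θ * St θ * ρ₀ + ε * (C θ * St θ + S θ * Ct θ) * h ρ₀ := by
    rw [hρ]; exact Hρθ.deriv
  have Hρx : HasDerivAt (fun x => (C θ * Ct θ - ε * S θ * St θ) * x + ε * S θ * St θ * h x)
      ((C θ * Ct θ - ε * S θ * St θ) + ε * S θ * St θ * ζ₀ ρ₀) ρ₀ := by
    have := ((hasDerivAt_id' (x := ρ₀)).const_mul (C θ * Ct θ - ε * S θ * St θ)).add
      (hH.const_mul (ε * S θ * St θ))
    convert this using 1
    any_goals rfl
    ring
  have dρx : deriv (fun x => ρ θ x) ρ₀ =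
      (C θ * Ct θ - ε * S θ * St θ) + ε * S θ * St θ * ζ₀ ρ₀ := by
    rw [hρ]; exact Hρx.deriv
  have HJθ : HasDerivAt
      (fun t => a * ((C t * St t - ε * εt * S t * Ct t) * ρ₀ + ε * εt * S t * Ct t * h ρ₀))
      (a * ((1 - ε * εt) * C θ * Ct θ * ρ₀ + (ε * εt * (C θ * Ct θ) + ε * S θ * St θ) * h ρ₀)) θ := by
    have := ((((hCθ.mul hStθ).sub ((hSθ.const_mul (ε * εt)).mul hCtθ)).mul_const ρ₀).add
      (((hSθ.const_mul (ε * εt)).mul hCtθ).mul_const (h ρ₀))).const_mul a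
    convert this using 1
    any_goals rfl
    linear_combination (a * ε * S θ * St θ * (ρ₀ - h ρ₀)) * hf2
  have dJθ : deriv (fun t => J t ρ₀) θ =
      a * ((1 - ε * εt) * C θ * Ct θ * ρ₀ + (ε * εt * (C θ * Ct θ) + ε * S θ * St θ) * h ρ₀) := by
    rw [hJ]; exact HJθ.deriv
  have HJx : HasDerivAt
      (fun x => a * ((C θ * St θ - ε * εt * S θ * Ct θ) * x + ε * εt * S θ * Ct θ * h x))
      (a * ((C θ * St θ - ε * εt * S θ * Ct θ) + ε * εt * S θ * Ct θ * ζ₀ ρ₀)) ρ₀ := by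
    have := (((hasDerivAt_id' (x := ρ₀)).const_mul (C θ * St θ - ε * εt * S θ * Ct θ)).add
      (hH.const_mul (ε * εt * S θ * Ct θ))).const_mul a
    convert this using 1
    any_goals rfl
    ring
  have dJx : deriv (fun x => J θ x) ρ₀ =
      a * ((C θ * St θ - ε * εt * S θ * Ct θ) + ε * εt * S θ * Ct θ * ζ₀ ρ₀) := by
    rw [hJ]; exact HJx.deriv
  rw [dρθ, dρx, dJθ, dJx]
  linear_combination
    (a * (h ρ₀ * ε * εt + St θ ^ 2 * h ρ₀ * ε - Ct θ ^ 2 * h ρ₀ * ε * εt)) * hc +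
    (a * (-(h ρ₀ * ε * εt) - 2 * S θ ^ 2 * h ρ₀ * ε ^ 2 * εt + S θ ^ 2 * h ρ₀ * ζ₀ ρ₀ * εt
        - C θ ^ 2 * ρ₀ + C θ ^ 2 * ρ₀ * ε * εt)) * hct +
    (a * (-(S θ ^ 2 * h ρ₀ * εt) + S θ ^ 2 * St θ ^ 2 * h ρ₀ - S θ ^ 2 * St θ ^ 2 * h ρ₀ * εt ^ 2
        - S θ ^ 2 * St θ ^ 2 * h ρ₀ * ζ₀ ρ₀ + S θ ^ 2 * Ct θ ^ 2 * h ρ₀ * ζ₀ ρ₀ * εt)) * he2 +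
    (a * (-(St θ ^ 2 * h ρ₀ * ε) - S θ ^ 2 * St θ ^ 2 * h ρ₀ - S θ ^ 2 * St θ ^ 2 * h ρ₀ * ε ^ 2
        + S θ ^ 2 * St θ ^ 2 * h ρ₀ * ζ₀ ρ₀ - C θ * S θ * Ct θ * St θ * ρ₀ * ε
        + C θ * S θ * Ct θ * St θ * ρ₀ * ζ₀ ρ₀ * ε + C θ ^ 2 * St θ ^ 2 * ρ₀ * ε)) * hf2 -
    (a * (ε * εt - 1) * C θ ^ 2) * hk
end

section
/- Let a > 0 and ε, ε̃ ∈ {−1, 1}. Let S, C : ℝ → ℝ be differentiable with S(0) = 0, C(0) = 1, S' = C, C' = ε·S, and S̃, C̃ : ℝ → ℝ differentiable with S̃(0) = 0, C̃(0) = 1, S̃' = C̃, C̃' = ε̃·S̃. Let U ⊆ ℝ be open, σ : U → ℝ twice differentiable with σ ≠ 0 and σ' ≠ 0 on U, h := σ/σ'. Define Ξ : ℝ × U → ℝ², Ξ(θ, ρ₀) := ((C_θC̃_θ − εS_θS̃_θ)ρ₀ + εS_θS̃_θ h(ρ₀), a[(C_θS̃_θ − εε̃S_θC̃_θ)ρ₀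 + εε̃S_θC̃_θ h(ρ₀)]). Let V ⊆ ℝ² be open and let θ̂, ρ̂₀ : V → ℝ be differentiable with ρ̂₀(V) ⊆ U and Ξ(θ̂(ρ, J), ρ̂₀(ρ, J)) = (ρ, J) for all (ρ, J) ∈ V. Define η : V → ℝ by η(ρ, J) := C_{θ̂(ρ,J)} · σ(ρ̂₀(ρ, J)). Then at every point of V: ∂η/∂ρ = C̃_{θ̂} · σ'(ρ̂₀) and ∂η/∂J = −(ε̃/a) · S̃_{θ̂} · σ'(ρ̂₀). -/
set_option maxHeartbeats 1000000 in
/-- Proposition 14 (entropy variables): the partial derivatives of the entropy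
η(ρ,J) = C_{θ̂}·σ(ρ̂₀) with respect to the conserved variables. -/
theorem statement_12 (a ε εt : ℝ) (ha : 0 < a)
    (hε : ε = -1 ∨ ε = 1) (hεt : εt = -1 ∨ εt = 1)
    (S C St Ct : ℝ → ℝ)
    (hSd : Differentiable ℝ S) (hCd : Differentiable ℝ C)
    (hStd : Differentiable ℝ St) (hCtd : Differentiable ℝ Ct)
    (hS0 : S 0 = 0) (hC0 : C 0 = 1) (hSt0 : St 0 = 0) (hCt0 : Ct 0 = 1)
    (hS' : ∀ θ, deriv S θ = C θ) (hC' : ∀ θ, deriv C θ = ε * S θ)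
    (hSt' : ∀ θ, deriv St θ = Ct θ) (hCt' : ∀ θ, deriv Ct θ = εt * St θ)
    (U : Set ℝ) (hU : IsOpen U)
    (σ : ℝ → ℝ)
    (hσd : ∀ x ∈ U, DifferentiableAt ℝ σ x)
    (hσd2 : ∀ x ∈ U, DifferentiableAt ℝ (deriv σ) x)
    (hσ0 : ∀ x ∈ U, σ x ≠ 0) (hσ'0 : ∀ x ∈ U, deriv σ x ≠ 0)
    (h : ℝ → ℝ) (hh : h = fun x => σ x / deriv σ x)
    (Ξ : ℝ × ℝ → ℝ × ℝ)
    (hΞ : Ξ = fun q =>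
      ((C q.1 * Ct q.1 - ε * S q.1 * St q.1) * q.2 + ε * S q.1 * St q.1 * h q.2,
        a * ((C q.1 * St q.1 - ε * εt * S q.1 * Ct q.1) * q.2
          + ε * εt * S q.1 * Ct q.1 * h q.2)))
    (V : Set (ℝ × ℝ)) (hV : IsOpen V)
    (θh ρ₀h : ℝ × ℝ → ℝ)
    (hθhd : ∀ p ∈ V, DifferentiableAt ℝ θh p)
    (hρ₀hd : ∀ p ∈ V, DifferentiableAt ℝ ρ₀h p)
    (hmem : ∀ p ∈ V, ρ₀h p ∈ U)
    (hinv : ∀ p ∈ V, Ξ (θh p, ρ₀h p) = p)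
    (η : ℝ × ℝ → ℝ) (hη : η = fun p => C (θh p) * σ (ρ₀h p)) :
    ∀ p ∈ V,
      deriv (fun x => η (x, p.2)) p.1 = Ct (θh p) * deriv σ (ρ₀h p) ∧
      deriv (fun y => η (p.1, y)) p.2 = -(εt / a) * St (θh p) * deriv σ (ρ₀h p) := by
  subst hΞ hη
  have ha' : a ≠ 0 := ha.ne'
  have het : εt * εt = 1 := by rcases hεt with rfl | rfl <;> norm_num
  -- pointwise `HasDerivAt` facts for the group functions
  have hSat : ∀ x, HasDerivAt S (C x) x := fun x => hS' x ▸ (hSd x).hasDerivAt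
  have hCat : ∀ x, HasDerivAt C (ε * S x) x := fun x => hC' x ▸ (hCd x).hasDerivAt
  have hStat : ∀ x, HasDerivAt St (Ct x) x := fun x => hSt' x ▸ (hStd x).hasDerivAt
  have hCtat : ∀ x, HasDerivAt Ct (εt * St x) x := fun x => hCt' x ▸ (hCtd x).hasDerivAt
  -- the invariant Ct² - εt St² = 1
  have hInv : ∀ x, Ct x * Ct x - εt * (St x * St x) = 1 := by
    have hfd : ∀ x, HasDerivAt (fun y => Ct y * Ct y - εt * (St y * St y))
        (εt * St x * Ct x + Ct x * (εt * St x)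
          - (0 * (St x * St x) + εt * (Ct x * St x + St x * Ct x))) x := by
      intro x
      exact ((hCtat x).mul (hCtat x)).sub
        ((hasDerivAt_const x εt).mul ((hStat x).mul (hStat x)))
    have hcst : ∀ x y : ℝ, (fun y => Ct y * Ct y - εt * (St y * St y)) x
        = (fun y => Ct y * Ct y - εt * (St y * St y)) y := by
      apply is_const_of_deriv_eq_zero
      · exact fun x => ((hfd x).differentiableAt)
      · intro x
        rw [(hfd x).deriv]; ring
    intro x
    have := hcst x 0
    simp only [hSt0, hCt0] at this
    simpa using this
  intro p hp
  have hrU : ρ₀h p ∈ U := hmem p hp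
  have hsp : deriv σ (ρ₀h p) ≠ 0 := hσ'0 _ hrU
  have hhd : DifferentiableAt ℝ h (ρ₀h p) := by
    rw [hh]; exact (hσd _ hrU).div (hσd2 _ hrU) hsp
  have hHσ : deriv σ (ρ₀h p) * h (ρ₀h p) = σ (ρ₀h p) := by
    rw [hh]; field_simp
  -- the key directional computation
  have key : ∀ (γ : ℝ → ℝ × ℝ) (t0 : ℝ) (v : ℝ × ℝ), HasDerivAt γ v t0 → γ t0 = p →
      deriv (fun t => C (θh (γ t)) * σ (ρ₀h (γ t))) t0
        = Ct (θh p) * deriv σ (ρ₀h p) * v.1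
          - εt / a * St (θh p) * deriv σ (ρ₀h p) * v.2 := by
    intro γ t0 v hγ hγ0
    subst hγ0
    set q := γ t0 with hq
    have hθγ : HasDerivAt (fun t => θh (γ t)) (fderiv ℝ θh q v) t0 :=
      (hθhd q hp).hasFDerivAt.comp_hasDerivAt t0 hγ
    have hrγ : HasDerivAt (fun t => ρ₀h (γ t)) (fderiv ℝ ρ₀h q v) t0 :=
      (hρ₀hd q hp).hasFDerivAt.comp_hasDerivAt t0 hγ
    set tx := fderiv ℝ θh q v with htx
    set rx := fderiv ℝ ρ₀h q v with hrx
    set θp := θh q with hθp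
    set rp := ρ₀h q with hrp
    have hSγ : HasDerivAt (fun t => S (θh (γ t))) (C θp * tx) t0 := (hSat θp).comp t0 hθγ
    have hCγ : HasDerivAt (fun t => C (θh (γ t))) (ε * S θp * tx) t0 := (hCat θp).comp t0 hθγ
    have hStγ : HasDerivAt (fun t => St (θh (γ t))) (Ct θp * tx) t0 := (hStat θp).comp t0 hθγ
    have hCtγ : HasDerivAt (fun t => Ct (θh (γ t))) (εt * St θp * tx) t0 := (hCtat θp).comp t0 hθγ
    have hσγ : HasDerivAt (fun t => σ (ρ₀h (γ t))) (deriv σ rp * rx) t0 :=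
      (hσd _ hrU).hasDerivAt.comp t0 hrγ
    have hhγ : HasDerivAt (fun t => h (ρ₀h (γ t))) (deriv h rp * rx) t0 :=
      hhd.hasDerivAt.comp t0 hrγ
    set H := deriv h rp with hH
    have hev : ∀ᶠ t in nhds t0, γ t ∈ V := hγ.continuousAt.preimage_mem_nhds (hV.mem_nhds hp)
    -- first component of the constraint
    have hF1 : HasDerivAt (fun t =>
        (C (θh (γ t)) * Ct (θh (γ t)) - ε * S (θh (γ t)) * St (θh (γ t))) * ρ₀h (γ t)
          + ε * S (θh (γ t)) * St (θh (γ t)) * h (ρ₀h (γ t)))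
        (((ε * S θp * tx * Ct θp + C θp * (εt * St θp * tx))
            - ((0 * S θp + ε * (C θp * tx)) * St θp + ε * S θp * (Ct θp * tx))) * rp
          + (C θp * Ct θp - ε * S θp * St θp) * rx
          + (((0 * S θp + ε * (C θp * tx)) * St θp + ε * S θp * (Ct θp * tx)) * h rp
            + ε * S θp * St θp * (H * rx))) t0 :=
      (((hCγ.mul hCtγ).sub (((hasDerivAt_const t0 ε).mul hSγ).mul hStγ)).mul hrγ).add
        ((((hasDerivAt_const t0 ε).mul hSγ).mul hStγ).mul hhγ)
    have hG1 : HasDerivAt (fun t => (γ t).1)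
        (((ε * S θp * tx * Ct θp + C θp * (εt * St θp * tx))
            - ((0 * S θp + ε * (C θp * tx)) * St θp + ε * S θp * (Ct θp * tx))) * rp
          + (C θp * Ct θp - ε * S θp * St θp) * rx
          + (((0 * S θp + ε * (C θp * tx)) * St θp + ε * S θp * (Ct θp * tx)) * h rp
            + ε * S θp * St θp * (H * rx))) t0 := by
      refine hF1.congr_of_eventuallyEq ?_
      filter_upwards [hev] with t ht
      exact (congrArg Prod.fst (hinv _ ht)).symm
    have E1 : ((ε * S θp * tx * Ct θp + C θp * (εt * St θp * tx))
            - ((0 * S θp + ε * (C θp * tx)) * St θp + ε * S θp * (Ct θp * tx))) * rp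
          + (C θp * Ct θp - ε * S θp * St θp) * rx
          + (((0 * S θp + ε * (C θp * tx)) * St θp + ε * S θp * (Ct θp * tx)) * h rp
            + ε * S θp * St θp * (H * rx)) = v.1 := hG1.unique hγ.fst
    -- second component of the constraint (with the factor a divided out)
    have hF2 : HasDerivAt (fun t =>
        (C (θh (γ t)) * St (θh (γ t)) - ε * εt * S (θh (γ t)) * Ct (θh (γ t))) * ρ₀h (γ t)
          + ε * εt * S (θh (γ t)) * Ct (θh (γ t)) * h (ρ₀h (γ t)))
        (((ε * S θp * tx * St θp + C θp * (Ct θp * tx))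
            - ((0 * S θp + ε * εt * (C θp * tx)) * Ct θp + ε * εt * S θp * (εt * St θp * tx))) * rp
          + (C θp * St θp - ε * εt * S θp * Ct θp) * rx
          + (((0 * S θp + ε * εt * (C θp * tx)) * Ct θp + ε * εt * S θp * (εt * St θp * tx)) * h rp
            + ε * εt * S θp * Ct θp * (H * rx))) t0 :=
      (((hCγ.mul hStγ).sub (((hasDerivAt_const t0 (ε * εt)).mul hSγ).mul hCtγ)).mul hrγ).add
        ((((hasDerivAt_const t0 (ε * εt)).mul hSγ).mul hCtγ).mul hhγ)
    have hG2 : HasDerivAt (fun t => (γ t).2 / a)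
        (((ε * S θp * tx * St θp + C θp * (Ct θp * tx))
            - ((0 * S θp + ε * εt * (C θp * tx)) * Ct θp + ε * εt * S θp * (εt * St θp * tx))) * rp
          + (C θp * St θp - ε * εt * S θp * Ct θp) * rx
          + (((0 * S θp + ε * εt * (C θp * tx)) * Ct θp + ε * εt * S θp * (εt * St θp * tx)) * h rp
            + ε * εt * S θp * Ct θp * (H * rx))) t0 := by
      refine hF2.congr_of_eventuallyEq ?_
      filter_upwards [hev] with t ht
      have h2 : a * ((C (θh (γ t)) * St (θh (γ t)) - ε * εt * S (θh (γ t)) * Ct (θh (γ t)))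
            * ρ₀h (γ t) + ε * εt * S (θh (γ t)) * Ct (θh (γ t)) * h (ρ₀h (γ t))) = (γ t).2 :=
        congrArg Prod.snd (hinv _ ht)
      field_simp
      linarith [h2]
    have E2 : ((ε * S θp * tx * St θp + C θp * (Ct θp * tx))
            - ((0 * S θp + ε * εt * (C θp * tx)) * Ct θp + ε * εt * S θp * (εt * St θp * tx))) * rp
          + (C θp * St θp - ε * εt * S θp * Ct θp) * rx
          + (((0 * S θp + ε * εt * (C θp * tx)) * Ct θp + ε * εt * S θp * (εt * St θp * tx)) * h rp
            + ε * εt * S θp * Ct θp * (H * rx)) = v.2 / a := hG2.unique ((show HasDerivAt (fun t => (γ t).2) v.2 t0 from hγ.snd).div_const a)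
    -- derivative of the entropy along γ
    have hηγ : HasDerivAt (fun t => C (θh (γ t)) * σ (ρ₀h (γ t)))
        (ε * S θp * tx * σ rp + C θp * (deriv σ rp * rx)) t0 := hCγ.mul hσγ
    rw [hηγ.deriv]
    have hInvp := hInv θp
    linear_combination (Ct θp * deriv σ rp) * E1 - (εt * St θp * deriv σ rp) * E2
      - (deriv σ rp * C θp * rx + ε * S θp * deriv σ rp * h rp * tx) * hInvp
      - (ε * S θp * tx) * hHσ
      + (ε * deriv σ rp * (C θp * St θp * Ct θp * h rp * tx - C θp * St θp * Ct θp * rp * tx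
          - S θp * St θp * Ct θp * rx + S θp * St θp * Ct θp * H * rx
          + εt * S θp * (St θp * St θp) * h rp * tx
          - εt * S θp * (St θp * St θp) * rp * tx)) * het
  constructor
  · have hγ : HasDerivAt (fun x : ℝ => (x, p.2)) ((1 : ℝ), (0 : ℝ)) p.1 :=
      (hasDerivAt_id p.1).prodMk (hasDerivAt_const p.1 p.2)
    have := key (fun x => (x, p.2)) p.1 (1, 0) hγ rfl
    simpa using this
  · have hγ : HasDerivAt (fun y : ℝ => (p.1, y)) ((0 : ℝ), (1 : ℝ)) p.2 :=
      (hasDerivAt_const p.2 p.1).prodMk (hasDerivAt_id p.2)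
    have := key (fun y => (p.1, y)) p.2 (0, 1) hγ rfl
    simp only [Prod.fst, Prod.snd, mul_zero, mul_one, zero_sub] at this
    rw [show (fun y => C (θh (p.1, y)) * σ (ρ₀h (p.1, y)))
        = fun t => C (θh ((fun y => (p.1, y)) t)) * σ (ρ₀h ((fun y => (p.1, y)) t)) from rfl]
    rw [this]; ring
end

section
/- Let a > 0 and ε ∈ {−1, 1}. Let S, C : ℝ → ℝ be differentiable with S(0) = 0, C(0) = 1, S' = C, C' = ε·S. Let U ⊆ ℝ be open, σ : U → ℝ twice differentiable with σ ≠ 0 and σ' ≠ 0 on U; set h := σ/σ', ζ₀ := h'. Define Ξ : ℝ × U → ℝ² by Ξ(θ, ρ₀) := (ρ₀ + ε·S_θ²·h(ρ₀), a·S_θ·C_θ·h(ρ₀)), and δ(θ, ρ₀) := ε·S_θ²·ζ₀(ρ₀) − (C_θ² + ε·S_θ²). Let V ⊆ ℝ² be open and θ̂, ρ̂₀ : V → ℝ differentiable with ρ̂₀(V) ⊆ U and Ξ(θ̂(ρ,J), ρ̂₀(ρ,J)) = (ρ, J) on V; define α := C_{θ̂}·σ'(ρ̂₀) and β := −(ε/a)·S_{θ̂}·σ'(ρ̂₀)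 on V. Then, at every point of V at which δ(θ̂, ρ̂₀) ≠ 0, writing Δ for the Jacobian determinant of Ξ at (θ̂, ρ̂₀): (i) Δ = a·δ(θ̂,ρ̂₀)·h(ρ̂₀); (ii) the Jacobian determinant of the map (ρ, J) ↦ (α, β) equals ε·σ'(ρ̂₀)·σ''(ρ̂₀)/(a·Δ) = (ε/a²)·σ'(ρ̂₀)²·(σ''(ρ̂₀)/σ(ρ̂₀))·(1/δ); (iii) ∂α/∂ρ = (C_{θ̂}/δ)·(ε·S_{θ̂}²·ζ₀(ρ̂₀)·σ'(ρ̂₀)²/σ(ρ̂₀) − (C_{θ̂}² + ε·S_{θ̂}²)·σ''(ρ̂₀)). -/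
/-- Proposition 15 (technical lemma for convexity conditions), case ε = ε̃. -/
theorem statement_13 (a ε : ℝ) (ha : 0 < a) (hε : ε = -1 ∨ ε = 1)
    (S C : ℝ → ℝ)
    (hSd : Differentiable ℝ S) (hCd : Differentiable ℝ C)
    (hS0 : S 0 = 0) (hC0 : C 0 = 1)
    (hS' : ∀ θ, deriv S θ = C θ) (hC' : ∀ θ, deriv C θ = ε * S θ)
    (U : Set ℝ) (hU : IsOpen U)
    (σ : ℝ → ℝ)
    (hσd : ∀ x ∈ U, DifferentiableAt ℝ σ x)
    (hσd2 : ∀ x ∈ U, DifferentiableAt ℝ (deriv σ) x)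
    (hσ0 : ∀ x ∈ U, σ x ≠ 0) (hσ'0 : ∀ x ∈ U, deriv σ x ≠ 0)
    (h ζ₀ : ℝ → ℝ)
    (hh : h = fun x => σ x / deriv σ x) (hζ₀ : ζ₀ = deriv h)
    (Ξ : ℝ × ℝ → ℝ × ℝ)
    (hΞ : Ξ = fun q => (q.2 + ε * S q.1 ^ 2 * h q.2, a * S q.1 * C q.1 * h q.2))
    (δf : ℝ → ℝ → ℝ)
    (hδf : δf = fun θ ρ₀ => ε * S θ ^ 2 * ζ₀ ρ₀ - (C θ ^ 2 + ε * S θ ^ 2))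
    (V : Set (ℝ × ℝ)) (hV : IsOpen V)
    (θh ρ₀h : ℝ × ℝ → ℝ)
    (hθhd : ∀ p ∈ V, DifferentiableAt ℝ θh p)
    (hρ₀hd : ∀ p ∈ V, DifferentiableAt ℝ ρ₀h p)
    (hmem : ∀ p ∈ V, ρ₀h p ∈ U)
    (hinv : ∀ p ∈ V, Ξ (θh p, ρ₀h p) = p)
    (α β : ℝ × ℝ → ℝ)
    (hα : α = fun p => C (θh p) * deriv σ (ρ₀h p))
    (hβ : β = fun p => -(ε / a) * S (θh p) * deriv σ (ρ₀h p)) :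
    ∀ p ∈ V, δf (θh p) (ρ₀h p) ≠ 0 →
      ∀ Δ : ℝ,
        Δ = deriv (fun t => (Ξ (t, ρ₀h p)).1) (θh p)
              * deriv (fun x => (Ξ (θh p, x)).2) (ρ₀h p)
            - deriv (fun x => (Ξ (θh p, x)).1) (ρ₀h p)
              * deriv (fun t => (Ξ (t, ρ₀h p)).2) (θh p) →
        -- (i) Δ = a · δ · (σ/σ')
        (Δ = a * δf (θh p) (ρ₀h p) * h (ρ₀h p)) ∧
        -- (ii) the Hessian determinant of the entropy
        (deriv (fun x => α (x, p.2)) p.1 * deriv (fun y => β (p.1, y)) p.2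
            - deriv (fun y => α (p.1, y)) p.2 * deriv (fun x => β (x, p.2)) p.1
          = ε * deriv σ (ρ₀h p) * deriv (deriv σ) (ρ₀h p) / (a * Δ) ∧
         deriv (fun x => α (x, p.2)) p.1 * deriv (fun y => β (p.1, y)) p.2
            - deriv (fun y => α (p.1, y)) p.2 * deriv (fun x => β (x, p.2)) p.1
          = (ε / a ^ 2) * deriv σ (ρ₀h p) ^ 2
              * (deriv (deriv σ) (ρ₀h p) / σ (ρ₀h p)) * (1 / δf (θh p) (ρ₀h p))) ∧
        -- (iii) ∂α/∂ρ
        (deriv (fun x => α (x, p.2)) p.1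
          = (C (θh p) / δf (θh p) (ρ₀h p)) *
              (ε * S (θh p) ^ 2 * ζ₀ (ρ₀h p) * deriv σ (ρ₀h p) ^ 2 / σ (ρ₀h p)
                - (C (θh p) ^ 2 + ε * S (θh p) ^ 2) * deriv (deriv σ) (ρ₀h p))) := by
  subst hh
  subst hζ₀
  subst hΞ
  subst hδf
  subst hα
  subst hβ
  have ha' : a ≠ 0 := ne_of_gt ha
  have hε2 : ε * ε = 1 := by rcases hε with rfl | rfl <;> norm_num
  have hS : ∀ θ, HasDerivAt S (C θ) θ := fun θ => hS' θ ▸ (hSd θ).hasDerivAt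
  have hC : ∀ θ, HasDerivAt C (ε * S θ) θ := fun θ => hC' θ ▸ (hCd θ).hasDerivAt
  have pyth : ∀ θ, C θ ^ 2 - ε * S θ ^ 2 = 1 := by
    have hdiff : Differentiable ℝ (fun θ => C θ ^ 2 - ε * S θ ^ 2) :=
      (hCd.pow 2).sub ((hSd.pow 2).const_mul ε)
    have hder : ∀ θ, deriv (fun θ => C θ ^ 2 - ε * S θ ^ 2) θ = 0 := by
      intro θ
      have h1 : HasDerivAt (fun θ => C θ ^ 2 - ε * S θ ^ 2)
          ((2 : ℕ) * C θ ^ (2 - 1) * (ε * S θ) - ε * ((2 : ℕ) * S θ ^ (2 - 1) * C θ)) θ := by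
        exact ((hC θ).pow 2).sub (((hS θ).pow 2).const_mul ε)
      rw [h1.deriv]; push_cast; ring
    intro θ
    have hc := is_const_of_deriv_eq_zero hdiff hder θ 0
    simp only [hS0, hC0] at hc
    rw [hc]; ring
  intro p hp hδ Δ hΔ
  obtain ⟨x0, y0⟩ := p
  dsimp only at hΔ hδ ⊢
  set θ0 := θh (x0, y0) with hθ0def
  set r0 := ρ₀h (x0, y0) with hr0def
  have hr0U : r0 ∈ U := hmem _ hp
  have g1ne : deriv σ r0 ≠ 0 := hσ'0 _ hr0U
  have g0ne : σ r0 ≠ 0 := hσ0 _ hr0U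
  have hσ2 : HasDerivAt (deriv σ) (deriv (deriv σ) r0) r0 := (hσd2 _ hr0U).hasDerivAt
  have hhdiff : DifferentiableAt ℝ (fun x => σ x / deriv σ x) r0 :=
    (hσd _ hr0U).div (hσd2 _ hr0U) g1ne
  set ζ := deriv (fun x => σ x / deriv σ x) r0 with hζdef
  have hhd : HasDerivAt (fun x => σ x / deriv σ x) ζ r0 := hhdiff.hasDerivAt
  -- curves
  have hcur1 : DifferentiableAt ℝ (fun x : ℝ => ((x, y0) : ℝ × ℝ)) x0 :=
    differentiableAt_id.prodMk (differentiableAt_const _)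
  have hcur2 : DifferentiableAt ℝ (fun y : ℝ => ((x0, y) : ℝ × ℝ)) y0 :=
    (differentiableAt_const _).prodMk differentiableAt_id
  have hΘ1d : DifferentiableAt ℝ (fun x => θh (x, y0)) x0 := (hθhd _ hp).comp x0 hcur1
  have hR1d : DifferentiableAt ℝ (fun x => ρ₀h (x, y0)) x0 := (hρ₀hd _ hp).comp x0 hcur1
  have hΘ2d : DifferentiableAt ℝ (fun y => θh (x0, y)) y0 := (hθhd _ hp).comp y0 hcur2
  have hR2d : DifferentiableAt ℝ (fun y => ρ₀h (x0, y)) y0 := (hρ₀hd _ hp).comp y0 hcur2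
  set t1 := deriv (fun x => θh (x, y0)) x0 with ht1def
  set r1 := deriv (fun x => ρ₀h (x, y0)) x0 with hr1def
  set t2 := deriv (fun y => θh (x0, y)) y0 with ht2def
  set r2 := deriv (fun y => ρ₀h (x0, y)) y0 with hr2def
  have hΘ1 : HasDerivAt (fun x => θh (x, y0)) t1 x0 := hΘ1d.hasDerivAt
  have hR1 : HasDerivAt (fun x => ρ₀h (x, y0)) r1 x0 := hR1d.hasDerivAt
  have hΘ2 : HasDerivAt (fun y => θh (x0, y)) t2 y0 := hΘ2d.hasDerivAt
  have hR2 : HasDerivAt (fun y => ρ₀h (x0, y)) r2 y0 := hR2d.hasDerivAt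
  -- neighborhoods
  have hnb1 : ∀ᶠ x in nhds x0, ((x, y0) : ℝ × ℝ) ∈ V :=
    hcur1.continuousAt.preimage_mem_nhds (hV.mem_nhds hp)
  have hnb2 : ∀ᶠ y in nhds y0, ((x0, y) : ℝ × ℝ) ∈ V :=
    hcur2.continuousAt.preimage_mem_nhds (hV.mem_nhds hp)
  -- the four chain-rule equations
  have hf1 := hR1.add (((((hS θ0).comp x0 hΘ1).pow 2).const_mul ε).mul (hhd.comp x0 hR1))
  have hid1 : (fun x : ℝ => x) =ᶠ[nhds x0]
      (fun x => ρ₀h (x, y0) + ε * (S ∘ fun x => θh (x, y0)) x ^ 2 *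
        (((fun x => σ x / deriv σ x) ∘ fun x => ρ₀h (x, y0)) x)) := by
    filter_upwards [hnb1] with x hx
    have h1 := congrArg Prod.fst (hinv (x, y0) hx)
    simp only [Function.comp] at h1 ⊢
    exact h1.symm
  have E1raw := hf1.unique ((hasDerivAt_id' x0 : HasDerivAt (fun x : ℝ => x) 1 x0).congr_of_eventuallyEq hid1.symm)
  have hf2 := ((((hS θ0).comp x0 hΘ1).const_mul a).mul ((hC θ0).comp x0 hΘ1)).mul
      (hhd.comp x0 hR1)
  have hid2 : (fun _ : ℝ => y0) =ᶠ[nhds x0]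
      (fun x => a * (S ∘ fun x => θh (x, y0)) x * (C ∘ fun x => θh (x, y0)) x *
        (((fun x => σ x / deriv σ x) ∘ fun x => ρ₀h (x, y0)) x)) := by
    filter_upwards [hnb1] with x hx
    have h1 := congrArg Prod.snd (hinv (x, y0) hx)
    simp only [Function.comp] at h1 ⊢
    exact h1.symm
  have E2raw := hf2.unique ((hasDerivAt_const x0 y0).congr_of_eventuallyEq hid2.symm)
  have hf3 := hR2.add (((((hS θ0).comp y0 hΘ2).pow 2).const_mul ε).mul (hhd.comp y0 hR2))
  have hid3 : (fun _ : ℝ => x0) =ᶠ[nhds y0]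
      (fun y => ρ₀h (x0, y) + ε * (S ∘ fun y => θh (x0, y)) y ^ 2 *
        (((fun x => σ x / deriv σ x) ∘ fun y => ρ₀h (x0, y)) y)) := by
    filter_upwards [hnb2] with y hy
    have h1 := congrArg Prod.fst (hinv (x0, y) hy)
    simp only [Function.comp] at h1 ⊢
    exact h1.symm
  have E3raw := hf3.unique ((hasDerivAt_const y0 x0).congr_of_eventuallyEq hid3.symm)
  have hf4 := ((((hS θ0).comp y0 hΘ2).const_mul a).mul ((hC θ0).comp y0 hΘ2)).mul
      (hhd.comp y0 hR2)
  have hid4 : (fun y : ℝ => y) =ᶠ[nhds y0]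
      (fun y => a * (S ∘ fun y => θh (x0, y)) y * (C ∘ fun y => θh (x0, y)) y *
        (((fun x => σ x / deriv σ x) ∘ fun y => ρ₀h (x0, y)) y)) := by
    filter_upwards [hnb2] with y hy
    have h1 := congrArg Prod.snd (hinv (x0, y) hy)
    simp only [Function.comp] at h1 ⊢
    exact h1.symm
  have E4raw := hf4.unique ((hasDerivAt_id' y0 : HasDerivAt (fun y : ℝ => y) 1 y0).congr_of_eventuallyEq hid4.symm)
  simp only [Function.comp, Pi.mul_def, Pi.pow_def] at E1raw E2raw E3raw E4raw
  have E1 : (2 * ε * S θ0 * C θ0 * (σ r0 / deriv σ r0)) * t1 + (1 + ε * S θ0 ^ 2 * ζ) * r1 = 1 := by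
    push_cast at E1raw
    linear_combination E1raw
  have E2 : (a * (C θ0 ^ 2 + ε * S θ0 ^ 2) * (σ r0 / deriv σ r0)) * t1 + (a * S θ0 * C θ0 * ζ) * r1 = 0 := by
    push_cast at E2raw
    linear_combination E2raw
  have E3 : (2 * ε * S θ0 * C θ0 * (σ r0 / deriv σ r0)) * t2 + (1 + ε * S θ0 ^ 2 * ζ) * r2 = 0 := by
    push_cast at E3raw
    linear_combination E3raw
  have E4 : (a * (C θ0 ^ 2 + ε * S θ0 ^ 2) * (σ r0 / deriv σ r0)) * t2 + (a * S θ0 * C θ0 * ζ) * r2 = 1 := by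
    push_cast at E4raw
    linear_combination E4raw
  -- partial derivatives of Ξ
  have d1 : deriv (fun t => r0 + ε * S t ^ 2 * (σ r0 / deriv σ r0)) θ0
      = 0 + ε * ((2 : ℕ) * S θ0 ^ (2 - 1) * C θ0) * (σ r0 / deriv σ r0) :=
    ((hasDerivAt_const θ0 r0).add
      ((((hS θ0).pow 2).const_mul ε).mul_const (σ r0 / deriv σ r0))).deriv
  have d2 : deriv (fun x => a * S θ0 * C θ0 * (σ x / deriv σ x)) r0
      = a * S θ0 * C θ0 * ζ := (hhd.const_mul (a * S θ0 * C θ0)).deriv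
  have d3 : deriv (fun x => x + ε * S θ0 ^ 2 * (σ x / deriv σ x)) r0
      = 1 + ε * S θ0 ^ 2 * ζ :=
    ((hasDerivAt_id' r0).add (hhd.const_mul (ε * S θ0 ^ 2))).deriv
  have d4 : deriv (fun t => a * S t * C t * (σ r0 / deriv σ r0)) θ0
      = (a * C θ0 * C θ0 + a * S θ0 * (ε * S θ0)) * (σ r0 / deriv σ r0) :=
    ((((hS θ0).const_mul a).mul (hC θ0)).mul_const (σ r0 / deriv σ r0)).deriv
  rw [d1, d2, d3, d4] at hΔ
  push_cast at hΔ
  have hΔ' : Δ = (2 * ε * S θ0 * C θ0 * (σ r0 / deriv σ r0)) * (a * S θ0 * C θ0 * ζ)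
      - (1 + ε * S θ0 ^ 2 * ζ) * (a * (C θ0 ^ 2 + ε * S θ0 ^ 2) * (σ r0 / deriv σ r0)) := by
    linear_combination hΔ
  -- (i)
  have Gi : Δ = a * (ε * S θ0 ^ 2 * ζ - (C θ0 ^ 2 + ε * S θ0 ^ 2)) * (σ r0 / deriv σ r0) := by
    linear_combination hΔ' + (a * (σ r0 / deriv σ r0) * ζ * ε * S θ0 ^ 2) * pyth θ0
  have hΔ0 : Δ ≠ 0 := by
    rw [Gi]; exact mul_ne_zero (mul_ne_zero ha' hδ) (div_ne_zero g0ne g1ne)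
  -- Cramer relations
  have hT1 : Δ * t1 = a * S θ0 * C θ0 * ζ := by
    linear_combination t1 * hΔ' + (a * S θ0 * C θ0 * ζ) * E1 - (1 + ε * S θ0 ^ 2 * ζ) * E2
  have hR1c : Δ * r1 = -(a * (C θ0 ^ 2 + ε * S θ0 ^ 2) * (σ r0 / deriv σ r0)) := by
    linear_combination r1 * hΔ' + (2 * ε * S θ0 * C θ0 * (σ r0 / deriv σ r0)) * E2
      - (a * (C θ0 ^ 2 + ε * S θ0 ^ 2) * (σ r0 / deriv σ r0)) * E1
  have hT2 : Δ * t2 = -(1 + ε * S θ0 ^ 2 * ζ) := by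
    linear_combination t2 * hΔ' + (a * S θ0 * C θ0 * ζ) * E3 - (1 + ε * S θ0 ^ 2 * ζ) * E4
  have hR2c : Δ * r2 = 2 * ε * S θ0 * C θ0 * (σ r0 / deriv σ r0) := by
    linear_combination r2 * hΔ' + (2 * ε * S θ0 * C θ0 * (σ r0 / deriv σ r0)) * E4
      - (a * (C θ0 ^ 2 + ε * S θ0 ^ 2) * (σ r0 / deriv σ r0)) * E3
  have hK : Δ * (t1 * r2 - t2 * r1) = 1 := by
    have hK' : Δ * (Δ * (t1 * r2 - t2 * r1)) = Δ * 1 := by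
      linear_combination (Δ * r2) * hT1 + (a * S θ0 * C θ0 * ζ) * hR2c
        - (Δ * r1) * hT2 + (1 + ε * S θ0 ^ 2 * ζ) * hR1c - hΔ'
    exact mul_left_cancel₀ hΔ0 hK'
  -- derivatives of α and β
  have A1 : deriv (fun x => C (θh (x, y0)) * deriv σ (ρ₀h (x, y0))) x0
      = ε * S θ0 * t1 * deriv σ r0 + C θ0 * (deriv (deriv σ) r0 * r1) := by
    have h2 := (((hC θ0).comp x0 hΘ1).mul (hσ2.comp x0 hR1)).deriv
    simp only [Function.comp, Pi.mul_def] at h2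
    linear_combination h2
  have A2 : deriv (fun y => C (θh (x0, y)) * deriv σ (ρ₀h (x0, y))) y0
      = ε * S θ0 * t2 * deriv σ r0 + C θ0 * (deriv (deriv σ) r0 * r2) := by
    have h2 := (((hC θ0).comp y0 hΘ2).mul (hσ2.comp y0 hR2)).deriv
    simp only [Function.comp, Pi.mul_def] at h2
    linear_combination h2
  have B1 : deriv (fun x => -(ε / a) * S (θh (x, y0)) * deriv σ (ρ₀h (x, y0))) x0
      = -(ε / a) * (C θ0 * t1) * deriv σ r0 + -(ε / a) * S θ0 * (deriv (deriv σ) r0 * r1) := by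
    have h2 := ((((hS θ0).comp x0 hΘ1).const_mul (-(ε / a))).mul (hσ2.comp x0 hR1)).deriv
    simp only [Function.comp, Pi.mul_def] at h2
    linear_combination h2
  have B2 : deriv (fun y => -(ε / a) * S (θh (x0, y)) * deriv σ (ρ₀h (x0, y))) y0
      = -(ε / a) * (C θ0 * t2) * deriv σ r0 + -(ε / a) * S θ0 * (deriv (deriv σ) r0 * r2) := by
    have h2 := ((((hS θ0).comp y0 hΘ2).const_mul (-(ε / a))).mul (hσ2.comp y0 hR2)).deriv
    simp only [Function.comp, Pi.mul_def] at h2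
    linear_combination h2
  have hH : σ r0 / deriv σ r0 * deriv σ r0 = σ r0 := div_mul_cancel₀ _ g1ne
  have hGi' : Δ * deriv σ r0 = a * (ε * S θ0 ^ 2 * ζ - (C θ0 ^ 2 + ε * S θ0 ^ 2)) * σ r0 := by
    rw [Gi]; field_simp
  have hT1' : a * (ε * S θ0 ^ 2 * ζ - (C θ0 ^ 2 + ε * S θ0 ^ 2)) * σ r0 * t1
      = a * S θ0 * C θ0 * ζ * deriv σ r0 := by
    linear_combination deriv σ r0 * hT1 - t1 * hGi'
  have hR1' : a * (ε * S θ0 ^ 2 * ζ - (C θ0 ^ 2 + ε * S θ0 ^ 2)) * σ r0 * r1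
      = -(a * (C θ0 ^ 2 + ε * S θ0 ^ 2) * σ r0) := by
    linear_combination deriv σ r0 * hR1c - r1 * hGi' - (a * (C θ0 ^ 2 + ε * S θ0 ^ 2)) * hH
  have hK3 : a * (ε * S θ0 ^ 2 * ζ - (C θ0 ^ 2 + ε * S θ0 ^ 2)) * σ r0 * (t1 * r2 - t2 * r1)
      = deriv σ r0 := by
    linear_combination deriv σ r0 * hK - (t1 * r2 - t2 * r1) * hGi'
  have hT1'' : (ε * S θ0 ^ 2 * ζ - (C θ0 ^ 2 + ε * S θ0 ^ 2)) * σ r0 * t1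
      = S θ0 * C θ0 * ζ * deriv σ r0 := by
    apply mul_left_cancel₀ ha'
    linear_combination hT1'
  have hR1'' : (ε * S θ0 ^ 2 * ζ - (C θ0 ^ 2 + ε * S θ0 ^ 2)) * σ r0 * r1
      = -((C θ0 ^ 2 + ε * S θ0 ^ 2) * σ r0) := by
    apply mul_left_cancel₀ ha'
    linear_combination hR1'
  refine ⟨Gi, ⟨?_, ?_⟩, ?_⟩
  · rw [A1, A2, B1, B2, eq_div_iff (mul_ne_zero ha' hΔ0)]
    field_simp
    linear_combination (-(ε * deriv σ r0 * deriv (deriv σ) r0 * (ε * S θ0 ^ 2 - C θ0 ^ 2))) * hK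
      + (ε * deriv σ r0 * deriv (deriv σ) r0) * pyth θ0
  · rw [A1, A2, B1, B2]
    field_simp
    linear_combination (-(ε * deriv σ r0 * deriv (deriv σ) r0 * (ε * S θ0 ^ 2 - C θ0 ^ 2))) * hK3
      + (ε * deriv σ r0 ^ 2 * deriv (deriv σ) r0) * pyth θ0
  · rw [A1]
    field_simp
    linear_combination (ε * S θ0 * deriv σ r0) * hT1'' + (C θ0 * deriv (deriv σ) r0) * hR1''
end

section
/- Let a, c, ρ*, σ̄ > 0. On the open set V := {(ρ, J) ∈ ℝ² : |2J/(a·ρ*)| < 1}, define Ψ := 2J/(a·ρ*), ρ₀(ρ, J) := ρ + (ρ*/2)·(1 − √(1 − Ψ²)), u(ρ, J) := c·Ψ/(1 + √(1 − Ψ²)) (which equals c·tan(½·arcsin Ψ)), p₀(ρ, J) := a·c·(ρ₀(ρ, J) − ρ*), the flux f(ρ, J) := ((c/a)·J, u(ρ,J)·J + p₀(ρ,J)) ∈ ℝ², and the entropy η(ρ, J) := √(½·(1 + √(1 − Ψ²))) · σ̄ · exp(ρ₀(ρ, J)/ρ*). Then the entropy compatibility identity D(η·u)(ρ, J) = Dη(ρ,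 J) ∘ Df(ρ, J) holds at every (ρ, J) ∈ V; equivalently, ∂_ρ(ηu) = ∂_ρη·∂_ρf₁ + ∂_Jη·∂_ρf₂ and ∂_J(ηu) = ∂_ρη·∂_Jf₁ + ∂_Jη·∂_Jf₂, where f = (f₁, f₂). -/
set_option maxHeartbeats 2000000 in
/-- Proposition 16 (exponential entropy for a "circular-elliptic" system):
entropy compatibility identity D(ηu) = Dη ∘ Df on V. -/
theorem statement_14 (a c ρs σb : ℝ)
    (ha : 0 < a) (hc : 0 < c) (hρs : 0 < ρs) (hσb : 0 < σb)
    (V : Set (ℝ × ℝ)) (hV : V = {p : ℝ × ℝ | |2 * p.2 / (a * ρs)| < 1})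
    (Ψ : ℝ × ℝ → ℝ) (hΨ : Ψ = fun p => 2 * p.2 / (a * ρs))
    (ρ₀ : ℝ × ℝ → ℝ)
    (hρ₀ : ρ₀ = fun p => p.1 + (ρs / 2) * (1 - Real.sqrt (1 - Ψ p ^ 2)))
    (u : ℝ × ℝ → ℝ)
    (hu : u = fun p => c * Ψ p / (1 + Real.sqrt (1 - Ψ p ^ 2)))
    (p₀ : ℝ × ℝ → ℝ) (hp₀ : p₀ = fun p => a * c * (ρ₀ p - ρs))
    (f : ℝ × ℝ → ℝ × ℝ)
    (hf : f = fun p => ((c / a) * p.2, u p * p.2 + p₀ p))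
    (η : ℝ × ℝ → ℝ)
    (hη : η = fun p =>
      Real.sqrt ((1 / 2) * (1 + Real.sqrt (1 - Ψ p ^ 2))) * σb
        * Real.exp (ρ₀ p / ρs)) :
    ∀ p ∈ V, fderiv ℝ (fun q => η q * u q) p = (fderiv ℝ η p).comp (fderiv ℝ f p) := by
  intro p hp
  rw [hV, Set.mem_setOf_eq] at hp
  have ha0 : a ≠ 0 := ha.ne'
  have hρs0 : ρs ≠ 0 := hρs.ne'
  obtain ⟨ψ, hψdef⟩ : ∃ x : ℝ, 2 * p.2 / (a * ρs) = x := ⟨_, rfl⟩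
  rw [hψdef] at hp
  have h1ψ : 0 < 1 - ψ ^ 2 := by
    have h := abs_lt.mp hp
    nlinarith [h.1, h.2]
  obtain ⟨w, hwdef⟩ : ∃ x : ℝ, Real.sqrt (1 - ψ ^ 2) = x := ⟨_, rfl⟩
  have hw0 : 0 < w := hwdef ▸ Real.sqrt_pos.mpr h1ψ
  have hw2 : w ^ 2 = 1 - ψ ^ 2 := by rw [← hwdef]; exact Real.sq_sqrt h1ψ.le
  have h1w : 0 < 1 + w := by linarith
  obtain ⟨S, hSdef⟩ : ∃ x : ℝ, Real.sqrt (1 / 2 * (1 + w)) = x := ⟨_, rfl⟩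
  have hS0 : 0 < S := hSdef ▸ Real.sqrt_pos.mpr (by linarith)
  have hS2 : S ^ 2 = 1 / 2 * (1 + w) := by rw [← hSdef]; exact Real.sq_sqrt (by linarith)
  -- derivative of Ψ
  have hΨd := show HasFDerivAt Ψ _ p by
    rw [hΨ]
    exact HasDerivAt.comp_hasFDerivAt p
      ((HasDerivAt.const_mul (2:ℝ) (hasDerivAt_id p.2)).div_const (a * ρs))
      (hasFDerivAt_snd : HasFDerivAt Prod.snd (ContinuousLinearMap.snd ℝ ℝ ℝ) p)
  have hΨp : Ψ p = ψ := by rw [hΨ, ← hψdef]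
  -- 1D derivative of y ↦ √(1 - y²) at ψ
  have hWd1 : HasDerivAt (fun y : ℝ => Real.sqrt (1 - y ^ 2)) (-ψ / w) ψ := by
    have h := (Real.hasDerivAt_sqrt h1ψ.ne').comp ψ
      (HasDerivAt.const_sub 1 (hasDerivAt_pow 2 ψ))
    refine h.congr_deriv ?_; symm
    rw [hwdef]
    field_simp
    ring
  have hwd := HasDerivAt.comp_hasFDerivAt_of_eq p hWd1 hΨd hΨp.symm
  -- u
  have hUd1 : HasDerivAt (fun y : ℝ => c * y / (1 + Real.sqrt (1 - y ^ 2)))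
      (c / (w * (1 + w))) ψ := by
    have hne : 1 + Real.sqrt (1 - ψ ^ 2) ≠ 0 := by rw [hwdef]; exact h1w.ne'
    have h := (HasDerivAt.const_mul c (hasDerivAt_id ψ)).div
      (HasDerivAt.const_add 1 hWd1) hne
    refine h.congr_deriv ?_; symm
    simp only [id_eq, mul_one]
    rw [hwdef]
    field_simp
    linear_combination (-1 : ℝ) * hw2
  have hud := show HasFDerivAt u _ p by
    rw [hu]; exact HasDerivAt.comp_hasFDerivAt_of_eq p hUd1 hΨd hΨp.symm
  -- ρ₀, p₀
  have hρ₀d := show HasFDerivAt ρ₀ _ p by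
    rw [hρ₀]
    exact (hasFDerivAt_fst : HasFDerivAt Prod.fst (ContinuousLinearMap.fst ℝ ℝ ℝ) p).add
      ((hwd.const_sub 1).const_mul (ρs / 2))
  have hρ₀p : ρ₀ p = p.1 + ρs / 2 * (1 - w) := by
    simp only [hρ₀, hΨ]
    rw [hψdef, hwdef]
  have hp₀d := show HasFDerivAt p₀ _ p by
    rw [hp₀]; exact (hρ₀d.sub_const ρs).const_mul (a * c)
  -- f
  have hfd := show HasFDerivAt f _ p by
    rw [hf]
    exact HasFDerivAt.prodMk (HasDerivAt.comp_hasFDerivAt p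
        ((HasDerivAt.const_mul (c/a) (hasDerivAt_id p.2)))
        (hasFDerivAt_snd : HasFDerivAt Prod.snd (ContinuousLinearMap.snd ℝ ℝ ℝ) p))
      ((hud.mul (hasFDerivAt_snd : HasFDerivAt Prod.snd (ContinuousLinearMap.snd ℝ ℝ ℝ) p)).add hp₀d)
  -- η pieces
  have hSd1 : HasDerivAt (fun y : ℝ => Real.sqrt (1 / 2 * (1 + Real.sqrt (1 - y ^ 2))))
      (-ψ / (4 * S * w)) ψ := by
    have hne : 1 / 2 * (1 + Real.sqrt (1 - ψ ^ 2)) ≠ 0 := by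
      rw [hwdef]; positivity
    have h := (Real.hasDerivAt_sqrt hne).comp ψ
      (HasDerivAt.const_mul (1/2 : ℝ) (HasDerivAt.const_add 1 hWd1))
    refine h.congr_deriv ?_; symm
    rw [hwdef, hSdef]
    field_simp
    ring
  have hSd2 := HasDerivAt.comp_hasFDerivAt_of_eq p hSd1 hΨd hΨp.symm
  obtain ⟨r, hrdef⟩ : ∃ x : ℝ, p.1 + ρs / 2 * (1 - w) = x := ⟨_, rfl⟩
  obtain ⟨E, hEdef⟩ : ∃ x : ℝ, Real.exp (r / ρs) = x := ⟨_, rfl⟩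
  have hE1 : HasDerivAt (fun y : ℝ => Real.exp (y / ρs)) (E / ρs) r := by
    have h := (Real.hasDerivAt_exp (r / ρs)).comp r ((hasDerivAt_id r).div_const ρs)
    refine h.congr_deriv ?_; symm
    rw [← hEdef]
    field_simp
  have hρ₀r : r = ρ₀ p := by rw [hρ₀p, hrdef]
  have hEd := HasDerivAt.comp_hasFDerivAt_of_eq p hE1 hρ₀d hρ₀r
  have hηd := show HasFDerivAt η _ p by
    rw [hη]; exact (hSd2.mul_const σb).mul hEd
  -- value lemmas
  have hup : u p = c * ψ / (1 + w) := by
    simp only [hu, hΨ]; rw [hψdef, hwdef]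
  have hηp : η p = S * σb * E := by
    simp only [hη, hΨ, hρ₀]
    rw [hψdef, hwdef, hSdef]
    rw [show p.1 + ρs / 2 * (1 - w) = r from hrdef, hEdef]
  have hp2 : p.2 = ψ * (a * ρs) / 2 := by
    rw [← hψdef]; field_simp
  -- clean forms of the derivatives
  have hηN : HasFDerivAt η ((S * σb * E / ρs) • ContinuousLinearMap.fst ℝ ℝ ℝ
      + (σb * E * ψ / (2 * S * (a * ρs))) • ContinuousLinearMap.snd ℝ ℝ ℝ) p := by
    refine hηd.congr_fderiv ?_; symm
    refine ContinuousLinearMap.ext fun v => ?_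
    simp only [ContinuousLinearMap.add_apply, ContinuousLinearMap.smul_apply,
      ContinuousLinearMap.coe_fst', ContinuousLinearMap.coe_snd', smul_eq_mul,
      ContinuousLinearMap.neg_apply, Function.comp_apply, hΨp, hψdef, hwdef, hSdef,
      hρ₀p, hrdef, hEdef, mul_one, id_eq]
    field_simp
    linear_combination (-(8 * E * ψ * v.2)) * hS2
  have huN : HasFDerivAt u ((2 * c / (a * ρs * (w * (1 + w)))) • ContinuousLinearMap.snd ℝ ℝ ℝ) p := by
    refine hud.congr_fderiv ?_; symm
    refine ContinuousLinearMap.ext fun v => ?_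
    simp only [ContinuousLinearMap.smul_apply, ContinuousLinearMap.coe_snd', smul_eq_mul]
    field_simp
  have hfN : HasFDerivAt f (((c / a) • ContinuousLinearMap.snd ℝ ℝ ℝ).prod
      ((a * c) • ContinuousLinearMap.fst ℝ ℝ ℝ + (2 * c * ψ / w) • ContinuousLinearMap.snd ℝ ℝ ℝ)) p := by
    refine hfd.congr_fderiv ?_; symm
    refine ContinuousLinearMap.ext fun v => Prod.ext ?_ ?_
    · simp only [ContinuousLinearMap.prod_apply, ContinuousLinearMap.smul_apply,
        ContinuousLinearMap.coe_snd', smul_eq_mul, mul_one]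
    · simp only [ContinuousLinearMap.prod_apply, ContinuousLinearMap.add_apply,
        ContinuousLinearMap.smul_apply, ContinuousLinearMap.coe_fst',
        ContinuousLinearMap.coe_snd', smul_eq_mul, ContinuousLinearMap.neg_apply,
        hup, hp2, mul_one]
      field_simp
      ring
  rw [HasFDerivAt.fderiv (f := fun q => η q * u q) (hηN.mul huN), hηN.fderiv, hfN.fderiv]
  refine ContinuousLinearMap.ext fun v => ?_
  simp only [ContinuousLinearMap.add_apply, ContinuousLinearMap.smul_apply,
    ContinuousLinearMap.coe_comp', Function.comp_apply, ContinuousLinearMap.prod_apply,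
    ContinuousLinearMap.coe_fst', ContinuousLinearMap.coe_snd', smul_eq_mul,
    hup, hηp]
  field_simp
  linear_combination
    (E * v.2 * (4 - 2 * w - 2 * w ^ 2) + 2 * E * a * ψ * v.1 * w) * hS2
      + (-((w + 2) * E * v.2)) * hw2
end

section
/- Let a, c, ρ*, σ̄ > 0. On the open set V := {(ρ, J) ∈ ℝ² : |2J/(a·ρ*)| < 1}, define Ψ := 2J/(a·ρ*), ρ₀(ρ, J) := ρ + (ρ*/2)·(1 − √(1 − Ψ²)), u(ρ, J) := c·Ψ/(1 + √(1 − Ψ²)), p₀(ρ, J) := a·c·(ρ₀(ρ, J) − ρ*), f(ρ, J) := ((c/a)·J, u(ρ,J)·J + p₀(ρ,J)), and η(ρ, J) := √(½·(1 + √(1 − Ψ²))) · σ̄ · exp(ρ₀(ρ, J)/ρ*). Then at every point of V the Hessian matrix of η is positive definite (in particular ∂²η/∂ρ² > 0 and det Hess η > 0), so η is strictly convex on V; consequently the Jacobian matrix Df(ρ, J) is diagonalizable with real eigenvalues at every (ρ, J) ∈ V, i.e., the system ∂_t(ρ,J) + ∂_x f(ρ,J) = 0 is hyperbolic. -/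
namespace Prop16Aux

noncomputable def S (k y : ℝ) : ℝ := Real.sqrt (1 - (k*y)^2)
noncomputable def Gf (k σb y : ℝ) : ℝ :=
  σb * Real.sqrt ((1 + S k y)/2) * Real.exp ((1 - S k y)/2)
noncomputable def Gd (k σb y : ℝ) : ℝ := Gf k σb y * (k^2*y/(2*(1+S k y)))
noncomputable def Gdd (k σb y : ℝ) : ℝ :=
  Gf k σb y * ((k^2*y/(2*(1+S k y)))^2
    + (k^2/2)*((1+S k y) + k^2*y^2/S k y)/(1+S k y)^2)
noncomputable def Ff (ρs x : ℝ) : ℝ := Real.exp (x/ρs)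

variable {k σb ρs y x : ℝ}

lemma S_pos (h : (k*y)^2 < 1) : 0 < S k y := Real.sqrt_pos.2 (by linarith)

lemma S_sq (h : (k*y)^2 < 1) : (S k y)^2 = 1 - (k*y)^2 :=
  Real.sq_sqrt (by nlinarith)

lemma one_add_S_pos (h : (k*y)^2 < 1) : 0 < 1 + S k y := by
  have := S_pos h; linarith

lemma A_pos (h : (k*y)^2 < 1) : 0 < Real.sqrt ((1 + S k y)/2) :=
  Real.sqrt_pos.2 (by have := one_add_S_pos h; linarith)

lemma A_sq (h : (k*y)^2 < 1) : (Real.sqrt ((1 + S k y)/2))^2 = (1 + S k y)/2 :=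
  Real.sq_sqrt (by have := one_add_S_pos h; linarith)

lemma Gf_pos (hσb : 0 < σb) (h : (k*y)^2 < 1) : 0 < Gf k σb y := by
  have := A_pos (k := k) h
  exact mul_pos (mul_pos hσb this) (Real.exp_pos _)

lemma hasDerivAt_S (h : (k*y)^2 < 1) :
    HasDerivAt (S k) (-(k^2*y) / S k y) y := by
  have hin : HasDerivAt (fun t : ℝ => 1 - (k*t)^2) (-(2*k^2*y)) y := by
    have : HasDerivAt (fun t : ℝ => k*t) k y := by
      simpa using (hasDerivAt_id y).const_mul k
    have h2 := (this.pow 2).const_sub 1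
    refine h2.congr_deriv (Eq.symm ?_); ring
  have hne : (1 : ℝ) - (k*y)^2 ≠ 0 := by nlinarith
  have := hin.sqrt hne
  refine this.congr_deriv (Eq.symm ?_)
  have hs := S_pos h
  unfold S at *
  field_simp

lemma hasDerivAt_Ff (hρs : ρs ≠ 0) : HasDerivAt (Ff ρs) (Ff ρs x / ρs) x := by
  have : HasDerivAt (fun t : ℝ => t/ρs) (1/ρs) x := (hasDerivAt_id x).div_const ρs
  have := this.exp
  refine this.congr_deriv (Eq.symm ?_)
  unfold Ff; field_simp

lemma hasDerivAt_Gf (h : (k*y)^2 < 1) :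
    HasDerivAt (Gf k σb) (Gd k σb y) y := by
  have hS := hasDerivAt_S h
  have hs := S_pos h
  have h1s := one_add_S_pos h
  have hA := A_pos h
  have hA2 := A_sq (k := k) h
  have hS2 := S_sq h
  have hAd : HasDerivAt (fun t => Real.sqrt ((1 + S k t)/2))
      ((-(k^2*y)/S k y / 2) / (2 * Real.sqrt ((1 + S k y)/2))) y := by
    have hin : HasDerivAt (fun t => (1 + S k t)/2) (-(k^2*y)/S k y / 2) y :=
      (hS.const_add 1).div_const 2
    exact hin.sqrt (by positivity)
  have hEd : HasDerivAt (fun t => Real.exp ((1 - S k t)/2))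
      (Real.exp ((1 - S k y)/2) * (-(-(k^2*y)/S k y) / 2)) y := by
    have hin : HasDerivAt (fun t => (1 - S k t)/2) (-(-(k^2*y)/S k y)/2) y := by
      have := (hS.const_sub 1).div_const 2
      convert this using 1
    exact hin.exp
  have hprod := ((hAd.const_mul σb).mul hEd)
  have : Gf k σb = fun t => (σb * Real.sqrt ((1 + S k t)/2)) * Real.exp ((1 - S k t)/2) := rfl
  rw [this]
  refine hprod.congr_deriv (Eq.symm ?_)
  unfold Gd Gf
  set A := Real.sqrt ((1 + S k y)/2) with hAdef
  set s := S k y with hsdef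
  set E := Real.exp ((1 - s)/2)
  have hE : 0 < E := Real.exp_pos _
  field_simp
  linear_combination (-2*σb*k^2*y) * hA2

lemma hasDerivAt_Gd (h : (k*y)^2 < 1) :
    HasDerivAt (Gd k σb) (Gdd k σb y) y := by
  have hS := hasDerivAt_S h
  have hs := S_pos h
  have h1s := one_add_S_pos h
  have hG := hasDerivAt_Gf (σb := σb) h
  have hnum : HasDerivAt (fun t : ℝ => k^2*t) (k^2) y := by
    simpa using (hasDerivAt_id y).const_mul (k^2)
  have hden : HasDerivAt (fun t : ℝ => 2*(1+S k t)) (2*(-(k^2*y)/S k y)) y := by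
    simpa using (hS.const_add 1).const_mul 2
  have hh : HasDerivAt (fun t : ℝ => k^2*t/(2*(1+S k t)))
      ((k^2 * (2*(1+S k y)) - k^2*y * (2*(-(k^2*y)/S k y))) / (2*(1+S k y))^2) y :=
    hnum.div hden (by positivity)
  have hprod := hG.mul hh
  have hGdfun : Gd k σb = fun t => Gf k σb t * (k^2*t/(2*(1+S k t))) := rfl
  rw [hGdfun]
  refine hprod.congr_deriv (Eq.symm ?_)
  unfold Gdd Gd
  set s := S k y
  set G := Gf k σb y
  field_simp
  ring

lemma sq_Gd_lt (hk : k ≠ 0) (hσb : 0 < σb) (h : (k*y)^2 < 1) :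
    (Gd k σb y)^2 < Gf k σb y * Gdd k σb y := by
  have hs := S_pos h
  have h1s := one_add_S_pos h
  have hG := Gf_pos hσb h
  have hp : 0 < (k^2/2)*((1+S k y) + k^2*y^2/S k y)/(1+S k y)^2 := by
    have hk2 : 0 < k^2 := by positivity
    have : 0 < (1+S k y) + k^2*y^2/S k y := by positivity
    positivity
  have key : Gf k σb y * Gdd k σb y - (Gd k σb y)^2
      = Gf k σb y^2 * ((k^2/2)*((1+S k y) + k^2*y^2/S k y)/(1+S k y)^2) := by
    unfold Gdd Gd; ring
  nlinarith [mul_pos (mul_pos hG hG) hp]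

lemma quad_pos {A B C v w : ℝ} (hA : 0 < A) (hD : B^2 < A*C)
    (hvw : ¬ (v = 0 ∧ w = 0)) : 0 < A*v^2 + 2*B*(v*w) + C*w^2 := by
  rcases eq_or_ne w 0 with rfl | hw
  · have hv : v ≠ 0 := fun hv => hvw ⟨hv, rfl⟩
    have : 0 < v^2 := sq_pos_of_ne_zero hv
    nlinarith
  · have hw2 : 0 < w^2 := sq_pos_of_ne_zero hw
    nlinarith [sq_nonneg (A*v + B*w), mul_pos (sub_pos.2 hD) hw2]

lemma Ff_pos : 0 < Ff ρs x := Real.exp_pos _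

lemma quadform_pos (hρs : 0 < ρs) (hk : k ≠ 0) (hσb : 0 < σb)
    (h : (k*y)^2 < 1) {v₁ v₂ : ℝ} (hv : ¬(v₁ = 0 ∧ v₂ = 0)) :
    0 < (Ff ρs x/ρs^2*Gf k σb y)*v₁^2 + 2*(Ff ρs x/ρs*Gd k σb y)*(v₁*v₂)
      + (Ff ρs x*Gdd k σb y)*v₂^2 := by
  have hF : 0 < Ff ρs x := Ff_pos
  refine quad_pos ?_ ?_ hv
  · exact mul_pos (div_pos hF (pow_pos hρs 2)) (Gf_pos hσb h)
  · have h1 := sq_Gd_lt hk hσb h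
    have hc : 0 < Ff ρs x^2/ρs^2 := by positivity
    have e1 : (Ff ρs x/ρs*Gd k σb y)^2 = Ff ρs x^2/ρs^2*(Gd k σb y^2) := by ring
    have e2 : Ff ρs x/ρs^2*Gf k σb y*(Ff ρs x*Gdd k σb y)
        = Ff ρs x^2/ρs^2*(Gf k σb y*Gdd k σb y) := by ring
    rw [e1, e2]
    exact mul_lt_mul_of_pos_left h1 hc

/-! ### 2D layer -/

variable {p : ℝ × ℝ}

noncomputable def etaFG (ρs k σb : ℝ) : ℝ × ℝ → ℝ := fun p => Ff ρs p.1 * Gf k σb p.2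

noncomputable def Dmap (ρs k σb : ℝ) (p : ℝ × ℝ) : (ℝ × ℝ) →L[ℝ] ℝ :=
  (Ff ρs p.1 / ρs * Gf k σb p.2) • (ContinuousLinearMap.fst ℝ ℝ ℝ)
  + (Ff ρs p.1 * Gd k σb p.2) • (ContinuousLinearMap.snd ℝ ℝ ℝ)

lemma hasFDerivAt_comp_fst {F : ℝ → ℝ} {F' : ℝ} (hF : HasDerivAt F F' p.1) :
    HasFDerivAt (fun q : ℝ × ℝ => F q.1) (F' • (ContinuousLinearMap.fst ℝ ℝ ℝ)) p :=
  hF.comp_hasFDerivAt p (hasFDerivAt_fst)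

lemma hasFDerivAt_comp_snd {F : ℝ → ℝ} {F' : ℝ} (hF : HasDerivAt F F' p.2) :
    HasFDerivAt (fun q : ℝ × ℝ => F q.2) (F' • (ContinuousLinearMap.snd ℝ ℝ ℝ)) p :=
  hF.comp_hasFDerivAt p (hasFDerivAt_snd)

lemma hasFDerivAt_etaFG (hρs : ρs ≠ 0) (hp : (k*p.2)^2 < 1) :
    HasFDerivAt (etaFG ρs k σb) (Dmap ρs k σb p) p := by
  have hF := hasFDerivAt_comp_fst (p := p) (hasDerivAt_Ff (x := p.1) hρs)
  have hG := hasFDerivAt_comp_snd (p := p) (hasDerivAt_Gf (σb := σb) hp)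
  have := hF.mul hG
  refine this.congr_fderiv (Eq.symm ?_)
  unfold Dmap
  refine ContinuousLinearMap.ext fun v => ?_
  simp only [ContinuousLinearMap.add_apply, ContinuousLinearMap.smul_apply,
    ContinuousLinearMap.coe_fst', ContinuousLinearMap.coe_snd', smul_eq_mul]
  ring

noncomputable def Hmap (ρs k σb : ℝ) (p : ℝ × ℝ) :
    (ℝ × ℝ) →L[ℝ] ((ℝ × ℝ) →L[ℝ] ℝ) :=
  ((Ff ρs p.1/ρs^2 * Gf k σb p.2) • (ContinuousLinearMap.fst ℝ ℝ ℝ)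
    + (Ff ρs p.1/ρs * Gd k σb p.2) • (ContinuousLinearMap.snd ℝ ℝ ℝ)).smulRight
      (ContinuousLinearMap.fst ℝ ℝ ℝ)
  + ((Ff ρs p.1/ρs * Gd k σb p.2) • (ContinuousLinearMap.fst ℝ ℝ ℝ)
    + (Ff ρs p.1 * Gdd k σb p.2) • (ContinuousLinearMap.snd ℝ ℝ ℝ)).smulRight
      (ContinuousLinearMap.snd ℝ ℝ ℝ)

lemma hasFDerivAt_Dmap (hρs : ρs ≠ 0) (hp : (k*p.2)^2 < 1) :
    HasFDerivAt (Dmap ρs k σb) (Hmap ρs k σb p) p := by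
  have hF1 := hasFDerivAt_comp_fst (p := p) ((hasDerivAt_Ff (x := p.1) hρs).div_const ρs)
  have hG1 := hasFDerivAt_comp_snd (p := p) (hasDerivAt_Gf (σb := σb) hp)
  have hc₁ := hF1.mul hG1
  have hF2 := hasFDerivAt_comp_fst (p := p) (hasDerivAt_Ff (x := p.1) hρs)
  have hG2 := hasFDerivAt_comp_snd (p := p) (hasDerivAt_Gd (σb := σb) hp)
  have hc₂ := hF2.mul hG2
  have hD := (hc₁.smul_const (ContinuousLinearMap.fst ℝ ℝ ℝ)).add
    (hc₂.smul_const (ContinuousLinearMap.snd ℝ ℝ ℝ))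
  have hDfun : Dmap ρs k σb = fun q =>
      (Ff ρs q.1/ρs * Gf k σb q.2) • (ContinuousLinearMap.fst ℝ ℝ ℝ)
      + (Ff ρs q.1 * Gd k σb q.2) • (ContinuousLinearMap.snd ℝ ℝ ℝ) := rfl
  rw [hDfun]
  refine hD.congr_fderiv (Eq.symm ?_)
  unfold Hmap
  refine ContinuousLinearMap.ext fun v => ?_
  refine ContinuousLinearMap.ext fun w => ?_
  simp only [ContinuousLinearMap.add_apply, ContinuousLinearMap.smul_apply,
    ContinuousLinearMap.smulRight_apply, ContinuousLinearMap.coe_fst',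
    ContinuousLinearMap.coe_snd', smul_eq_mul]
  ring

lemma Hmap_apply (v : ℝ × ℝ) :
    Hmap ρs k σb p v v = (Ff ρs p.1/ρs^2 * Gf k σb p.2) * v.1^2
      + 2*(Ff ρs p.1/ρs * Gd k σb p.2)*(v.1*v.2)
      + (Ff ρs p.1 * Gdd k σb p.2) * v.2^2 := by
  unfold Hmap
  simp only [ContinuousLinearMap.add_apply, ContinuousLinearMap.smul_apply,
    ContinuousLinearMap.smulRight_apply, ContinuousLinearMap.coe_fst',
    ContinuousLinearMap.coe_snd', smul_eq_mul]
  ring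

/-! ### line restriction -/

variable {d : ℝ × ℝ} {t : ℝ}

lemma hasDerivAt_line1 {x : ℝ × ℝ} (hρs : ρs ≠ 0) (h : (k*(x.2+t*d.2))^2 < 1) :
    HasDerivAt (fun r => Ff ρs (x.1+r*d.1) * Gf k σb (x.2+r*d.2))
      (d.1*(Ff ρs (x.1+t*d.1)/ρs)*Gf k σb (x.2+t*d.2)
        + d.2*(Ff ρs (x.1+t*d.1))*Gd k σb (x.2+t*d.2)) t := by
  have haff1 : HasDerivAt (fun r : ℝ => x.1+r*d.1) d.1 t := by
    simpa using ((hasDerivAt_id t).mul_const d.1).const_add x.1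
  have haff2 : HasDerivAt (fun r : ℝ => x.2+r*d.2) d.2 t := by
    simpa using ((hasDerivAt_id t).mul_const d.2).const_add x.2
  have hF : HasDerivAt (fun r => Ff ρs (x.1+r*d.1)) (Ff ρs (x.1+t*d.1)/ρs * d.1) t :=
    (hasDerivAt_Ff hρs).comp t haff1
  have hG : HasDerivAt (fun r => Gf k σb (x.2+r*d.2)) (Gd k σb (x.2+t*d.2) * d.2) t :=
    by have := (hasDerivAt_Gf (σb := σb) h).comp t haff2; exact this
  have := hF.mul hG
  refine this.congr_deriv (Eq.symm ?_)
  ring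

lemma hasDerivAt_line2 {x : ℝ × ℝ} (hρs : ρs ≠ 0) (h : (k*(x.2+t*d.2))^2 < 1) :
    HasDerivAt (fun r => d.1*(Ff ρs (x.1+r*d.1)/ρs)*Gf k σb (x.2+r*d.2)
        + d.2*(Ff ρs (x.1+r*d.1))*Gd k σb (x.2+r*d.2))
      ((Ff ρs (x.1+t*d.1)/ρs^2*Gf k σb (x.2+t*d.2))*d.1^2
        + 2*(Ff ρs (x.1+t*d.1)/ρs*Gd k σb (x.2+t*d.2))*(d.1*d.2)
        + (Ff ρs (x.1+t*d.1)*Gdd k σb (x.2+t*d.2))*d.2^2) t := by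
  have haff1 : HasDerivAt (fun r : ℝ => x.1+r*d.1) d.1 t := by
    simpa using ((hasDerivAt_id t).mul_const d.1).const_add x.1
  have haff2 : HasDerivAt (fun r : ℝ => x.2+r*d.2) d.2 t := by
    simpa using ((hasDerivAt_id t).mul_const d.2).const_add x.2
  have hF : HasDerivAt (fun r => Ff ρs (x.1+r*d.1)) (Ff ρs (x.1+t*d.1)/ρs * d.1) t :=
    (hasDerivAt_Ff hρs).comp t haff1
  have hG : HasDerivAt (fun r => Gf k σb (x.2+r*d.2)) (Gd k σb (x.2+t*d.2) * d.2) t :=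
    by have := (hasDerivAt_Gf (σb := σb) h).comp t haff2; exact this
  have hGd : HasDerivAt (fun r => Gd k σb (x.2+r*d.2)) (Gdd k σb (x.2+t*d.2) * d.2) t :=
    by have := (hasDerivAt_Gd (σb := σb) h).comp t haff2; exact this
  have h1 := (((hF.div_const ρs).const_mul d.1).mul hG)
  have h2 := ((hF.const_mul d.2).mul hGd)
  have := h1.add h2
  refine this.congr_deriv (Eq.symm ?_)
  ring

end Prop16Aux

section MainProof
open Prop16Aux

/-- Proposition 16 (hyperbolicity of the "circular-elliptic" system): the Hessian of η
is positive definite on V, η is strictly convex on V, and the Jacobian Df is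
diagonalizable with real eigenvalues at every point of V. -/
theorem statement_15 (a c ρs σb : ℝ)
    (ha : 0 < a) (hc : 0 < c) (hρs : 0 < ρs) (hσb : 0 < σb)
    (V : Set (ℝ × ℝ)) (hV : V = {p : ℝ × ℝ | |2 * p.2 / (a * ρs)| < 1})
    (Ψ : ℝ × ℝ → ℝ) (hΨ : Ψ = fun p => 2 * p.2 / (a * ρs))
    (ρ₀ : ℝ × ℝ → ℝ)
    (hρ₀ : ρ₀ = fun p => p.1 + (ρs / 2) * (1 - Real.sqrt (1 - Ψ p ^ 2)))
    (u : ℝ × ℝ → ℝ)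
    (hu : u = fun p => c * Ψ p / (1 + Real.sqrt (1 - Ψ p ^ 2)))
    (p₀ : ℝ × ℝ → ℝ) (hp₀ : p₀ = fun p => a * c * (ρ₀ p - ρs))
    (f : ℝ × ℝ → ℝ × ℝ)
    (hf : f = fun p => ((c / a) * p.2, u p * p.2 + p₀ p))
    (η : ℝ × ℝ → ℝ)
    (hη : η = fun p =>
      Real.sqrt ((1 / 2) * (1 + Real.sqrt (1 - Ψ p ^ 2))) * σb
        * Real.exp (ρ₀ p / ρs)) :
    -- the Hessian of η is positive definite at every point of V
    (∀ p ∈ V, ∀ v : ℝ × ℝ, v ≠ 0 → 0 < fderiv ℝ (fun q => fderiv ℝ η q) p v v) ∧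
    -- hence η is strictly convex on V
    StrictConvexOn ℝ V η ∧
    -- and Df is diagonalizable with real eigenvalues at every point of V
    (∀ p ∈ V, ∃ (v₁ v₂ : ℝ × ℝ) (l₁ l₂ : ℝ),
      LinearIndependent ℝ ![v₁, v₂] ∧
      fderiv ℝ f p v₁ = l₁ • v₁ ∧ fderiv ℝ f p v₂ = l₂ • v₂) := by
  set k : ℝ := 2/(a*ρs) with hkdef
  have hk : 0 < k := by positivity
  have haρs : 0 < a*ρs := by positivity
  have hkp : ∀ p : ℝ × ℝ, 2*p.2/(a*ρs) = k*p.2 := fun p => by rw [hkdef]; ring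
  have hkV : ∀ p ∈ V, (k*p.2)^2 < 1 := by
    intro p hp
    rw [hV] at hp
    rw [← hkp p]
    exact (sq_lt_one_iff_abs_lt_one _).2 hp
  have hVopen : IsOpen V := by
    rw [hV]
    exact isOpen_lt (((continuous_const.mul continuous_snd).div_const _).abs) continuous_const
  have hVconv : Convex ℝ V := by
    rw [hV]
    intro p hp q hq s t hs ht hst
    simp only [Set.mem_setOf_eq] at hp hq ⊢
    rw [abs_lt] at hp hq ⊢
    obtain ⟨h1, h2⟩ := hp
    obtain ⟨h3, h4⟩ := hq
    have b1 := (div_lt_one haρs).1 h2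
    have b2 := (lt_div_iff₀ haρs).1 h1
    have b3 := (div_lt_one haρs).1 h4
    have b4 := (lt_div_iff₀ haρs).1 h3
    have e : (s•p + t•q).2 = s*p.2 + t*q.2 := rfl
    rw [e]
    rcases eq_or_lt_of_le hs with hs0 | hs'
    · have ht1 : t = 1 := by linarith
      rw [← hs0, ht1]
      constructor
      · rw [lt_div_iff₀ haρs]; linarith
      · rw [div_lt_one haρs]; linarith
    · have hsum : s*(a*ρs) + t*(a*ρs) = a*ρs := by linear_combination (a*ρs)*hst
      constructor
      · rw [lt_div_iff₀ haρs]
        nlinarith [mul_lt_mul_of_pos_left b2 hs', mul_le_mul_of_nonneg_left b4.le ht]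
      · rw [div_lt_one haρs]
        nlinarith [mul_lt_mul_of_pos_left b1 hs', mul_le_mul_of_nonneg_left b3.le ht]
  have hηeq : η = etaFG ρs k σb := by
    funext p
    simp only [hη, hρ₀, hΨ]
    rw [hkp p]
    unfold etaFG Ff Gf S
    rw [show (p.1 + ρs/2*(1 - Real.sqrt (1-(k*p.2)^2)))/ρs
        = p.1/ρs + (1 - Real.sqrt (1-(k*p.2)^2))/2 from by field_simp]
    rw [Real.exp_add]
    rw [show (1/2 : ℝ)*(1+Real.sqrt (1-(k*p.2)^2))
        = (1+Real.sqrt (1-(k*p.2)^2))/2 from by ring]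
    ring
  refine ⟨?_, ?_, ?_⟩
  · -- Hessian positive definite
    intro p hp v hv
    rw [hηeq]
    have hfe : (fun q => fderiv ℝ (etaFG ρs k σb) q) =ᶠ[nhds p] Dmap ρs k σb :=
      Filter.eventuallyEq_of_mem (hVopen.mem_nhds hp)
        (fun q hq => (hasFDerivAt_etaFG hρs.ne' (hkV q hq)).fderiv)
    rw [hfe.fderiv_eq, (hasFDerivAt_Dmap hρs.ne' (hkV p hp)).fderiv, Hmap_apply]
    refine quadform_pos hρs hk.ne' hσb (hkV p hp) ?_
    rintro ⟨h1, h2⟩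
    exact hv (Prod.ext_iff.2 ⟨h1, h2⟩)
  · -- strict convexity
    rw [hηeq]
    refine ⟨hVconv, ?_⟩
    intro x hx y hy hxy m n hm hn hmn
    set d : ℝ × ℝ := y - x with hddef
    have hd : ¬(d.1 = 0 ∧ d.2 = 0) := by
      rintro ⟨h1, h2⟩
      exact hxy (sub_eq_zero.1 (Prod.ext_iff.2 ⟨h1, h2⟩ : d = 0)).symm
    have hmem : ∀ r ∈ Set.Icc (0:ℝ) 1, (x.1 + r*d.1, x.2 + r*d.2) ∈ V := by
      intro r hr
      have h1r : (0:ℝ) ≤ 1 - r := by linarith [hr.2]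
      have hcv := hVconv hx hy h1r hr.1 (by ring)
      have e : (x.1 + r*d.1, x.2 + r*d.2) = (1-r)•x + r•y := by
        refine Prod.ext_iff.2 ⟨?_, ?_⟩ <;>
          simp only [hddef, Prod.fst_add, Prod.snd_add, Prod.smul_fst, Prod.smul_snd,
            Prod.fst_sub, Prod.snd_sub, smul_eq_mul] <;> ring
      rw [e]
      exact hcv
    set g : ℝ → ℝ := fun r => Ff ρs (x.1+r*d.1) * Gf k σb (x.2+r*d.2) with hgdef
    set g₁ : ℝ → ℝ := fun r => d.1*(Ff ρs (x.1+r*d.1)/ρs)*Gf k σb (x.2+r*d.2)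
        + d.2*(Ff ρs (x.1+r*d.1))*Gd k σb (x.2+r*d.2) with hg1def
    set T : Set ℝ := {r : ℝ | (k*(x.2+r*d.2))^2 < 1} with hTdef
    have hT : IsOpen T := by
      apply isOpen_lt _ continuous_const
      fun_prop
    have hmemT : Set.Icc (0:ℝ) 1 ⊆ T := fun r hr => hkV _ (hmem r hr)
    have hsc : StrictConvexOn ℝ (Set.Icc (0:ℝ) 1) g := by
      apply strictConvexOn_of_deriv2_pos (convex_Icc 0 1)
      · intro r hr
        exact ((hasDerivAt_line1 hρs.ne' (hmemT hr)).continuousAt).continuousWithinAt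
      · intro r hr
        rw [interior_Icc] at hr
        have hrT : r ∈ T := hmemT ⟨hr.1.le, hr.2.le⟩
        rw [Function.iterate_succ_apply, Function.iterate_one]
        have hderiv_eq : deriv g =ᶠ[nhds r] g₁ :=
          Filter.eventuallyEq_of_mem (hT.mem_nhds hrT)
            (fun w hw => (hasDerivAt_line1 hρs.ne' hw).deriv)
        rw [hderiv_eq.deriv_eq, (hasDerivAt_line2 hρs.ne' hrT).deriv]
        exact quadform_pos hρs hk.ne' hσb hrT hd
    have key := hsc.2 (Set.left_mem_Icc.2 zero_le_one) (Set.right_mem_Icc.2 zero_le_one)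
      (by norm_num : (0:ℝ) ≠ 1) hm hn hmn
    simp only [smul_eq_mul, mul_zero, mul_one, zero_add] at key
    have e0 : g 0 = etaFG ρs k σb x := by simp [hgdef, etaFG]
    have e1 : g 1 = etaFG ρs k σb y := by
      simp only [hgdef, hddef, one_mul, etaFG, Prod.fst_sub, Prod.snd_sub]
      congr 2 <;> ring
    have en : (m•x + n•y) = ((x.1 + n*d.1, x.2 + n*d.2) : ℝ × ℝ) := by
      refine Prod.ext_iff.2 ⟨?_, ?_⟩
      · simp only [hddef, Prod.fst_add, Prod.smul_fst, Prod.fst_sub, smul_eq_mul]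
        linear_combination x.1 * hmn
      · simp only [hddef, Prod.snd_add, Prod.smul_snd, Prod.snd_sub, smul_eq_mul]
        linear_combination x.2 * hmn
    rw [e0, e1] at key
    have egn : etaFG ρs k σb (m•x + n•y) = g n := by rw [en]; rfl
    rw [egn]
    simpa using key
  · -- diagonalizability
    intro p hp
    have hpk := hkV p hp
    have hW0 : ∃ β, HasDerivAt
        (fun z => c*(k*z)/(1+S k z)*z + a*c*((ρs/2)*(1-S k z) - ρs)) β p.2 := by
      have hS := hasDerivAt_S hpk
      have h1s := one_add_S_pos hpk
      have hnum : HasDerivAt (fun z : ℝ => c*(k*z)) (c*k) p.2 := by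
        have := (hasDerivAt_id p.2).const_mul (c*k)
        simpa [mul_assoc] using this
      have hden : HasDerivAt (fun z => 1 + S k z) (-(k^2*p.2)/S k p.2) p.2 := hS.const_add 1
      have h1 := (hnum.div hden h1s.ne').mul (hasDerivAt_id p.2)
      have h2 := (((hS.const_sub 1).const_mul (ρs/2)).sub_const ρs).const_mul (a*c)
      exact ⟨_, h1.add h2⟩
    obtain ⟨β, hW⟩ := hW0
    have hfeq : f = fun q : ℝ × ℝ => ((c/a)*q.2,
        a*c*q.1 + (c*(k*q.2)/(1+S k q.2)*q.2 + a*c*((ρs/2)*(1-S k q.2) - ρs))) := by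
      funext q
      simp only [hf, hu, hp₀, hρ₀, hΨ]
      rw [hkp q]
      refine Prod.ext_iff.2 ⟨rfl, ?_⟩
      unfold S
      ring
    have hL : HasFDerivAt f
        (((c/a) • (ContinuousLinearMap.snd ℝ ℝ ℝ)).prod
          ((a*c) • (ContinuousLinearMap.fst ℝ ℝ ℝ) + β • (ContinuousLinearMap.snd ℝ ℝ ℝ))) p := by
      rw [hfeq]
      refine HasFDerivAt.prodMk ?_ ?_
      · refine hasFDerivAt_comp_snd ?_
        simpa using (hasDerivAt_id p.2).const_mul (c/a)
      · refine HasFDerivAt.add ?_ (hasFDerivAt_comp_snd hW)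
        refine hasFDerivAt_comp_fst ?_
        simpa using (hasDerivAt_id p.1).const_mul (a*c)
    set D : ℝ := Real.sqrt (β^2+4*c^2) with hDdef
    have hD2 : D^2 = β^2+4*c^2 := Real.sq_sqrt (by positivity)
    have hDpos : 0 < D := Real.sqrt_pos.2 (by positivity)
    have hca : c/a ≠ 0 := by positivity
    refine ⟨(c/a, (β+D)/2), (c/a, (β-D)/2), (β+D)/2, (β-D)/2, ?_, ?_, ?_⟩
    · rw [LinearIndependent.pair_iff]
      intro s t hst
      have h1 := congrArg Prod.fst hst
      have h2 := congrArg Prod.snd hst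
      simp only [Prod.fst_add, Prod.snd_add, Prod.smul_fst, Prod.smul_snd, smul_eq_mul,
        Prod.fst_zero, Prod.snd_zero] at h1 h2
      have hsum : s + t = 0 := by
        rcases mul_eq_zero.1 (show (s+t)*(c/a) = 0 by linear_combination h1) with h | h
        · exact h
        · exact absurd h hca
      have hs : s = -t := by linarith
      rw [hs] at h2
      have ht : t * D = 0 := by linear_combination -h2
      have ht0 : t = 0 := by
        rcases mul_eq_zero.1 ht with h | h
        · exact h
        · exact absurd h hDpos.ne'
      exact ⟨by rw [hs, ht0, neg_zero], ht0⟩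
    · rw [hL.fderiv]
      simp only [ContinuousLinearMap.prod_apply, ContinuousLinearMap.add_apply,
        ContinuousLinearMap.smul_apply, ContinuousLinearMap.coe_fst',
        ContinuousLinearMap.coe_snd', smul_eq_mul, Prod.smul_mk]
      refine Prod.ext_iff.2 ⟨by ring, ?_⟩
      have hac : a*c*(c/a) = c^2 := by field_simp
      simp only [smul_eq_mul]
      rw [hac]
      linear_combination (-1/4 : ℝ) * hD2
    · rw [hL.fderiv]
      simp only [ContinuousLinearMap.prod_apply, ContinuousLinearMap.add_apply,
        ContinuousLinearMap.smul_apply, ContinuousLinearMap.coe_fst',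
        ContinuousLinearMap.coe_snd', smul_eq_mul, Prod.smul_mk]
      refine Prod.ext_iff.2 ⟨by ring, ?_⟩
      have hac : a*c*(c/a) = c^2 := by field_simp
      simp only [smul_eq_mul]
      rw [hac]
      linear_combination (-1/4 : ℝ) * hD2

end MainProof
end

section
/- Let a, ρ* > 0 and J ∈ ℝ, and let ρ ∈ ℝ satisfy |J|/a ≤ ρ ≤ ρ*/2. Define h : [0, ∞) → ℝ by h(x) := x·(x + ρ*)/ρ* and F : [0, ∞) → ℝ by F(x) := x − h(x)/2 + ½·√(h(x)² + (2J/a)²). Then there exists a unique ρ₀ ∈ [0, ρ*/2] such that F(ρ₀) = ρ. -/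
/-- Proposition 17 (existence and uniqueness of the null-velocity density). -/
theorem statement_16 (a ρs J ρ : ℝ) (ha : 0 < a) (hρs : 0 < ρs)
    (hρ1 : |J| / a ≤ ρ) (hρ2 : ρ ≤ ρs / 2)
    (h F : ℝ → ℝ)
    (hh : h = fun x => x * (x + ρs) / ρs)
    (hF : F = fun x => x - h x / 2 + (1 / 2) * Real.sqrt (h x ^ 2 + (2 * J / a) ^ 2)) :
    ∃! ρ₀ : ℝ, ρ₀ ∈ Set.Icc 0 (ρs / 2) ∧ F ρ₀ = ρ := by
  have ha' : a ≠ 0 := ha.ne'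
  have hρs' : ρs ≠ 0 := hρs.ne'
  have hI : (0:ℝ) ≤ ρs / 2 := by linarith
  have hhx : ∀ x, h x = x * (x + ρs) / ρs := by rw [hh]; intro x; rfl
  have hFx : ∀ x, F x = x - h x / 2 + (1 / 2) * Real.sqrt (h x ^ 2 + (2 * J / a) ^ 2) := by
    rw [hF]; intro x; rfl
  have hnn : ∀ x, 0 ≤ x → 0 ≤ h x := by
    intro x hx; rw [hhx]; positivity
  have hle : ∀ x, 0 ≤ x → h x ≤ Real.sqrt (h x ^ 2 + (2 * J / a) ^ 2) := by
    intro x hx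
    have h1 : h x = Real.sqrt ((h x) ^ 2) := (Real.sqrt_sq (hnn x hx)).symm
    calc h x = Real.sqrt ((h x) ^ 2) := h1
      _ ≤ _ := Real.sqrt_le_sqrt (by nlinarith [sq_nonneg (2 * J / a)])
  have hcont : Continuous F := by
    rw [hF, hh]; fun_prop
  -- endpoint values
  have hF0 : F 0 = |J| / a := by
    rw [hFx]
    have h0 : h 0 = 0 := by rw [hhx]; ring
    rw [h0]
    rw [show (0:ℝ)^2 + (2 * J / a)^2 = (2 * J / a)^2 by ring, Real.sqrt_sq_eq_abs]
    rw [abs_div, abs_of_pos ha, abs_mul]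
    simp [abs_of_nonneg]
    field_simp
  have hFend : ρ ≤ F (ρs / 2) := by
    rw [hFx]
    have := hle (ρs / 2) hI
    linarith
  have hF0le : F 0 ≤ ρ := by rw [hF0]; exact hρ1
  -- existence via IVT
  obtain ⟨x, hx, hFxρ⟩ := intermediate_value_Icc hI hcont.continuousOn ⟨hF0le, hFend⟩
  -- strict monotonicity
  have hmono : StrictMonoOn F (Set.Icc 0 (ρs / 2)) := by
    rcases eq_or_ne J 0 with hJ | hJ
    · intro u hu v hv huv
      have key : ∀ z, 0 ≤ z → F z = z := by
        intro z hz
        rw [hFx, hJ]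
        rw [show (2 * 0 / a) ^ 2 = 0 by ring, add_zero, Real.sqrt_sq (hnn z hz)]
        ring
      rw [key u hu.1, key v hv.1]; exact huv
    · apply strictMonoOn_of_deriv_pos (convex_Icc _ _) hcont.continuousOn
      intro x hx
      rw [interior_Icc] at hx
      have hc2 : (0:ℝ) < (2 * J / a) ^ 2 := by
        have : 2 * J / a ≠ 0 := by
          apply div_ne_zero _ ha'
          exact mul_ne_zero two_ne_zero hJ
        positivity
      set H := h x with hH
      set k := (2 * x + ρs) / ρs with hk
      set D := Real.sqrt (H ^ 2 + (2 * J / a) ^ 2) with hD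
      have hHnn : 0 ≤ H := hnn x hx.1.le
      have hDpos : 0 < D := Real.sqrt_pos.mpr (by nlinarith [sq_nonneg H])
      have hHD : H < D := by
        have : Real.sqrt (H ^ 2) < D := by
          apply Real.sqrt_lt_sqrt (sq_nonneg H)
          nlinarith
        rwa [Real.sqrt_sq hHnn] at this
      have hk0 : 0 < k := by
        apply div_pos _ hρs
        linarith [hx.1]
      have hk2 : k < 2 := by
        rw [hk, div_lt_iff₀ hρs]
        linarith [hx.2]
      -- derivative of h
      have Hh : HasDerivAt h k x := by
        have h1 : HasDerivAt (fun y : ℝ => y * (y + ρs)) (1 * (x + ρs) + x * 1) x :=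
          (hasDerivAt_id x).mul ((hasDerivAt_id x).add_const ρs)
        have h2 := h1.div_const ρs
        rw [hh]
        refine h2.congr_deriv ?_
        rw [hk]; ring
      have Hg : HasDerivAt (fun y => h y ^ 2 + (2 * J / a) ^ 2)
          (2 * H ^ 1 * k) x := by
        simpa using (Hh.pow 2).add_const ((2 * J / a) ^ 2)
      have hne : H ^ 2 + (2 * J / a) ^ 2 ≠ 0 := by nlinarith [sq_nonneg H]
      have Hsqrt : HasDerivAt (fun y => Real.sqrt (h y ^ 2 + (2 * J / a) ^ 2))
          (1 / (2 * D) * (2 * H ^ 1 * k)) x :=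
        (Real.hasDerivAt_sqrt hne).comp x Hg
      have HF : HasDerivAt F (1 - k / 2 + (1 / 2) * (1 / (2 * D) * (2 * H ^ 1 * k))) x := by
        rw [hF]
        exact ((hasDerivAt_id x).sub (Hh.div_const 2)).add (Hsqrt.const_mul (1 / 2))
      rw [HF.deriv]
      have key : 0 < 2 * D - k * D + H * k := by
        nlinarith [mul_pos (sub_pos.mpr hk2) hDpos, mul_nonneg hHnn hk0.le]
      have heq : 1 - k / 2 + (1 / 2) * (1 / (2 * D) * (2 * H ^ 1 * k))
          = (2 * D - k * D + H * k) / (2 * D) := by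
        field_simp
      rw [heq]
      exact div_pos key (by linarith)
  refine ⟨x, ⟨hx, hFxρ⟩, ?_⟩
  intro y ⟨hy, hFy⟩
  exact hmono.injOn hy hx (by rw [hFy, hFxρ])
end
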